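/- arXiv:1110.3599 — 7 statements merged into one kernel-verified Lean document; each statement's English description precedes it below -/
import Mathlib

section
/- Let (U,V) be a pair of nonnegative random variables such that U is stochastically lower bounded by a uniform variable on [0,1], i.e., P(U ≤ t) ≤ t for all t ∈ [0,1]. Let ν be a probability distribution on (0,∞) and define the shape function β(x) = ∫₀ˣ u dν(u). Then for every c > 0, E[ 1{U ≤ c·β(V)} / V · 1{V > 0} ] ≤ c. -/
open MeasureTheory Set ENNReal

/-!
Layer cake in `1/V`: the expectation equals `∫₀^∞ P(U ≤ cβ(V), 0 < V ≤ 1/s) ds`, and since `β` is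
monotone each probability is at most `P(U ≤ cβ(1/s)) ≤ cβ(1/s)`. By Tonelli,
`∫₀^∞ β(1/s) ds = ∫ u · (1/u) dν(u) = ν(0,∞) ≤ 1`.
-/

lemma measure_setOf_le_le_ofReal {Ω : Type*} [MeasurableSpace Ω] {P : Measure Ω}
    [IsProbabilityMeasure P] {U : Ω → ℝ}
    (hU : ∀ t ∈ Icc (0 : ℝ) 1, P {ω | U ω ≤ t} ≤ ENNReal.ofReal t) {t : ℝ} (ht : 0 ≤ t) :
    P {ω | U ω ≤ t} ≤ ENNReal.ofReal t := by
  rcases le_total t 1 with ht1 | ht1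
  · exact hU t ⟨ht, ht1⟩
  · calc P {ω | U ω ≤ t} ≤ 1 := prob_le_one
      _ ≤ ENNReal.ofReal t := by simpa using ENNReal.ofReal_le_ofReal ht1

lemma ite_and_pos_inv_nonneg (p : Prop) [Decidable p] (v : ℝ) :
    0 ≤ if p ∧ 0 < v then v⁻¹ else 0 := by
  split_ifs with h
  exacts [inv_nonneg.2 h.2.le, le_rfl]

lemma lintegral_ofReal_ite_inv_le {Ω : Type*} [MeasurableSpace Ω] {P : Measure Ω}
    [IsProbabilityMeasure P] {U V : Ω → ℝ}
    (hU : ∀ t ∈ Icc (0 : ℝ) 1, P {ω | U ω ≤ t} ≤ ENNReal.ofReal t)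
    {g : ℝ → ℝ} (hg_mono : Monotone g) (hg_nonneg : ∀ x, 0 ≤ g x)
    (hmeas : AEMeasurable (fun ω ↦ if U ω ≤ g (V ω) ∧ 0 < V ω then (V ω)⁻¹ else 0) P) :
    ∫⁻ ω, ENNReal.ofReal (if U ω ≤ g (V ω) ∧ 0 < V ω then (V ω)⁻¹ else 0) ∂P
      ≤ ∫⁻ s in Ioi 0, ENNReal.ofReal (g s⁻¹) := by
  rw [lintegral_eq_lintegral_meas_le P (ae_of_all _ fun ω ↦ ite_and_pos_inv_nonneg _ _) hmeas]
  refine setLIntegral_mono' measurableSet_Ioi fun s (hs : 0 < s) ↦ ?_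
  calc P {ω | s ≤ if U ω ≤ g (V ω) ∧ 0 < V ω then (V ω)⁻¹ else 0}
      ≤ P {ω | U ω ≤ g s⁻¹} := by
        refine measure_mono fun ω hω ↦ ?_
        by_cases h : U ω ≤ g (V ω) ∧ 0 < V ω
        · simp only [mem_ofPred_eq, h, and_self, if_true] at hω
          exact h.1.trans (hg_mono ((le_inv_comm₀ hs h.2).1 hω))
        · simp only [mem_ofPred_eq, h, if_false] at hω
          exact absurd hs hω.not_gt
    _ ≤ ENNReal.ofReal (g s⁻¹) := measure_setOf_le_le_ofReal hU (hg_nonneg _)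

lemma setLIntegral_Ioi_indicator_mul_le_one (μ : Measure ℝ) {a : ℝ} (ha : 0 < a) (f : ℝ → ℝ≥0∞) :
    ∫⁻ x in Ioi 0, {x | a * x ≤ 1}.indicator f x ∂μ = ∫⁻ x in Ioc 0 a⁻¹, f x ∂μ := by
  have hset : {x | a * x ≤ 1} ∩ Ioi 0 = Ioc 0 a⁻¹ := by
    ext x
    simp only [mem_inter_iff, mem_ofPred_eq, mem_Ioi, mem_Ioc, ← one_div, le_div_iff₀' ha]
    exact and_comm
  rw [lintegral_indicator (measurableSet_le (by fun_prop) measurable_const),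
    Measure.restrict_restrict (measurableSet_le (by fun_prop) measurable_const), hset]

lemma lintegral_Ioi_setLIntegral_Ioc_inv (ν : Measure ℝ) [SFinite ν] :
    ∫⁻ s in Ioi 0, ∫⁻ u in Ioc 0 s⁻¹, ENNReal.ofReal u ∂ν = ν (Ioi 0) := by
  calc ∫⁻ s in Ioi 0, ∫⁻ u in Ioc 0 s⁻¹, ENNReal.ofReal u ∂ν
      = ∫⁻ s in Ioi 0, ∫⁻ u in Ioi 0, {x | s * x ≤ 1}.indicator ENNReal.ofReal u ∂ν :=
        setLIntegral_congr_fun measurableSet_Ioi fun s hs ↦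
          (setLIntegral_Ioi_indicator_mul_le_one ν hs _).symm
    _ = ∫⁻ u in Ioi 0, ∫⁻ s in Ioi 0,
          {x | u * x ≤ 1}.indicator (fun _ ↦ ENNReal.ofReal u) s ∂volume ∂ν := by
        rw [lintegral_lintegral_swap]
        · simp only [indicator_apply, mem_ofPred_eq, mul_comm]
        · exact ((measurable_snd.ennreal_ofReal).indicator
            (measurableSet_le (by fun_prop) measurable_const)).aemeasurable
    _ = ∫⁻ u in Ioi 0, 1 ∂ν := by
        refine setLIntegral_congr_fun measurableSet_Ioi fun u (hu : 0 < u) ↦ ?_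
        rw [setLIntegral_Ioi_indicator_mul_le_one _ hu, setLIntegral_const, Real.volume_Ioc,
          sub_zero, ← ENNReal.ofReal_mul hu.le, mul_inv_cancel₀ hu.ne', ENNReal.ofReal_one]
    _ = ν (Ioi 0) := setLIntegral_one _

noncomputable def shapeFunction (ν : Measure ℝ) (x : ℝ) : ℝ := ∫ u in Ioc 0 x, u ∂ν

namespace shapeFunction

variable (ν : Measure ℝ)

lemma nonneg (x : ℝ) : 0 ≤ shapeFunction ν x :=
  setIntegral_nonneg measurableSet_Ioc fun _ hu ↦ hu.1.le

variable [IsLocallyFiniteMeasure ν]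

lemma integrableOn_Ioc (x : ℝ) : IntegrableOn (fun u : ℝ ↦ u) (Ioc 0 x) ν :=
  continuous_id.integrableOn_Icc.mono_set Ioc_subset_Icc_self

lemma monotone : Monotone (shapeFunction ν) := fun _ y hxy ↦
  setIntegral_mono_set (integrableOn_Ioc ν y)
    ((ae_restrict_iff' measurableSet_Ioc).2 (ae_of_all _ fun _ hu ↦ hu.1.le))
    (Ioc_subset_Ioc_right hxy).eventuallyLE

lemma ofReal_eq (x : ℝ) :
    ENNReal.ofReal (shapeFunction ν x) = ∫⁻ u in Ioc 0 x, ENNReal.ofReal u ∂ν :=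
  ofReal_integral_eq_lintegral_ofReal (integrableOn_Ioc ν x)
    ((ae_restrict_iff' measurableSet_Ioc).2 (ae_of_all _ fun _ hu ↦ hu.1.le))

lemma lintegral_ofReal_inv :
    ∫⁻ s in Ioi 0, ENNReal.ofReal (shapeFunction ν s⁻¹) = ν (Ioi 0) := by
  simp_rw [ofReal_eq]
  exact lintegral_Ioi_setLIntegral_Ioc_inv ν

end shapeFunction

theorem dependence_control_shape_general
    {Ω : Type*} [MeasurableSpace Ω] (P : Measure Ω) [IsProbabilityMeasure P]
    (U V : Ω → ℝ)
    (hUnif : ∀ t : ℝ, t ∈ Set.Icc (0:ℝ) 1 → P {ω | U ω ≤ t} ≤ ENNReal.ofReal t)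
    (ν : Measure ℝ) [IsProbabilityMeasure ν]
    (β : ℝ → ℝ) (hβ : ∀ x, β x = ∫ u in Set.Ioc (0:ℝ) x, u ∂ν) :
    ∀ c : ℝ, 0 < c →
      ∫ ω, (if U ω ≤ c * β (V ω) ∧ 0 < V ω then (V ω)⁻¹ else 0) ∂P ≤ c := by
  intro c hc
  obtain rfl : β = shapeFunction ν := funext hβ
  by_cases hint : Integrable
      (fun ω ↦ if U ω ≤ c * shapeFunction ν (V ω) ∧ 0 < V ω then (V ω)⁻¹ else 0) P
  swap
  · -- a non-integrable function has Bochner integral `0`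
    rw [integral_undef hint]
    exact hc.le
  rw [integral_eq_lintegral_of_nonneg_ae (ae_of_all _ fun ω ↦ ite_and_pos_inv_nonneg _ _)
    hint.aestronglyMeasurable]
  refine ENNReal.toReal_le_of_le_ofReal hc.le ?_
  calc _ ≤ ∫⁻ s in Ioi 0, ENNReal.ofReal (c * shapeFunction ν s⁻¹) :=
        lintegral_ofReal_ite_inv_le hUnif ((shapeFunction.monotone ν).const_mul hc.le)
          (fun x ↦ mul_nonneg hc.le (shapeFunction.nonneg ν x)) hint.aemeasurable
    _ = ENNReal.ofReal c * ν (Ioi 0) := by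
        simp_rw [ENNReal.ofReal_mul hc.le]
        rw [lintegral_const_mul' _ _ ofReal_ne_top, shapeFunction.lintegral_ofReal_inv]
    _ ≤ ENNReal.ofReal c := mul_le_of_le_one_right' prob_le_one

/-- Dependence control condition for shape functions of the form
`β(x) = ∫_{(0,x]} u dν(u)` with `ν` a probability measure on `(0,∞)`:
if `U` is stochastically lower bounded by a uniform on `[0,1]`, then for all `c > 0`,
`E[ 1{U ≤ c β(V)} / V · 1{V > 0} ] ≤ c`. -/
theorem dependence_control_shape
    {Ω : Type*} [MeasurableSpace Ω] (P : Measure Ω) [IsProbabilityMeasure P]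
    (U V : Ω → ℝ) (hU : Measurable U) (hV : Measurable V)
    (hUpos : ∀ ω, 0 ≤ U ω) (hVpos : ∀ ω, 0 ≤ V ω)
    (hUnif : ∀ t : ℝ, t ∈ Set.Icc (0:ℝ) 1 → P {ω | U ω ≤ t} ≤ ENNReal.ofReal t)
    (ν : Measure ℝ) [IsProbabilityMeasure ν] (hν : ν (Set.Ioi (0:ℝ)) = 1)
    (β : ℝ → ℝ) (hβ : ∀ x, β x = ∫ u in Set.Ioc (0:ℝ) x, u ∂ν) :
    ∀ c : ℝ, 0 < c →
      ∫ ω, (if U ω ≤ c * β (V ω) ∧ 0 < V ω then (V ω)⁻¹ else 0) ∂P ≤ c :=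
  dependence_control_shape_general P U V hUnif ν β hβ
end

section
/- Let f : ℝ≥0 → ℝ≥0 be nondecreasing, right-continuous and bounded by M. Then the largest fixed-point r̂ = max{r ≥ 0 : f(r) ≥ r} satisfies r̂ = inf over rational ε>0 of sup{r ∈ ℚ≥0 : f(r) ≥ r − ε}. -/
open Set

/-- The largest fixed point `r̂ = max{r ≥ 0 : f(r) ≥ r}` of a nondecreasing,
right-continuous function `f` bounded by `M` can be written as the countable
inf-sup `inf_{ε ∈ ℚ, ε>0} sup_{r ∈ ℚ, r ≥ 0} ( r · 1{f(r) ≥ r − ε} )`. -/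
theorem stepup_rational_approx
    (M : ℝ) (hM : 0 ≤ M) (f : ℝ → ℝ)
    (hmono : ∀ r s : ℝ, 0 ≤ r → r ≤ s → f r ≤ f s)
    (hnonneg : ∀ r : ℝ, 0 ≤ r → 0 ≤ f r)
    (hbdd : ∀ r : ℝ, 0 ≤ r → f r ≤ M)
    (hrc : ∀ r : ℝ, 0 ≤ r → ContinuousWithinAt f (Ici r) r) :
    sSup {r : ℝ | 0 ≤ r ∧ r ≤ f r}
      = ⨅ ε : {q : ℚ // 0 < q}, ⨆ r : {q : ℚ // 0 ≤ q},
          (if f (r : ℝ) ≥ (r : ℝ) - (ε : ℝ) then (r : ℝ) else 0) := by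
  classical
  set S : Set ℝ := {r : ℝ | 0 ≤ r ∧ r ≤ f r} with hSdef
  have hS0 : (0:ℝ) ∈ S := ⟨le_refl 0, hnonneg 0 le_rfl⟩
  have hSbdd : BddAbove S := ⟨M, fun r hr => hr.2.trans (hbdd r hr.1)⟩
  set rhat : ℝ := sSup S with hrhatdef
  have hrhat0 : 0 ≤ rhat := le_csSup hSbdd hS0
  have hfix : rhat ≤ f rhat := by
    apply csSup_le ⟨0, hS0⟩
    intro r hr
    exact hr.2.trans (hmono r rhat hr.1 (le_csSup hSbdd hr))
  -- auxiliary sets and sups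
  set A : ℝ → Set ℝ := fun ε => {r : ℝ | 0 ≤ r ∧ r ≤ M + 1 ∧ r - ε ≤ f r} with hAdef
  set u : ℝ → ℝ := fun ε => sSup (A ε) with hudef
  have hA0 : ∀ ε : ℝ, 0 < ε → (0:ℝ) ∈ A ε := by
    intro ε hε
    refine ⟨le_refl 0, by linarith, ?_⟩
    have := hnonneg 0 le_rfl
    linarith
  have hAbdd : ∀ ε : ℝ, BddAbove (A ε) := by
    intro ε
    exact ⟨M + 1, fun r hr => hr.2.1⟩
  have hu0 : ∀ ε : ℝ, 0 < ε → 0 ≤ u ε := fun ε hε => le_csSup (hAbdd ε) (hA0 ε hε)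
  have humono : ∀ ε ε' : ℝ, 0 < ε → ε ≤ ε' → u ε ≤ u ε' := by
    intro ε ε' hε h
    apply csSup_le_csSup (hAbdd ε') ⟨0, hA0 ε hε⟩
    intro r hr
    exact ⟨hr.1, hr.2.1, by linarith [hr.2.2]⟩
  -- key sup property : u ε - ε ≤ f (u ε)
  have hukey : ∀ ε : ℝ, 0 < ε → u ε - ε ≤ f (u ε) := by
    intro ε hε
    have : u ε ≤ f (u ε) + ε := by
      apply csSup_le ⟨0, hA0 ε hε⟩
      intro r hr
      have h1 : f r ≤ f (u ε) := hmono r (u ε) hr.1 (le_csSup (hAbdd ε) hr)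
      linarith [hr.2.2]
    linarith
  -- ustar
  set ustar : ℝ := ⨅ ε : {q : ℚ // 0 < q}, u (ε : ℝ) with hustardef
  have hubdd : BddBelow (Set.range fun ε : {q : ℚ // 0 < q} => u (ε : ℝ)) := by
    refine ⟨0, ?_⟩
    rintro x ⟨ε, rfl⟩
    exact hu0 _ (by exact_mod_cast ε.2)
  have hustar_le : ∀ ε : {q : ℚ // 0 < q}, ustar ≤ u (ε : ℝ) := fun ε => ciInf_le hubdd ε
  have hustar0 : 0 ≤ ustar := by
    apply le_ciInf
    intro ε
    exact hu0 _ (by exact_mod_cast ε.2)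
  -- ustar is a fixed point
  have hustar_fix : ustar ≤ f ustar := by
    by_contra hcon
    push_neg at hcon
    set δ : ℝ := (ustar - f ustar) / 3 with hδdef
    have hδ : 0 < δ := by rw [hδdef]; linarith
    have hrc' := hrc ustar hustar0
    rw [Metric.continuousWithinAt_iff] at hrc'
    obtain ⟨η, hη, hball⟩ := hrc' δ hδ
    -- choose ε0 with u ε0 < ustar + η
    obtain ⟨ε0, hε0⟩ := exists_lt_of_ciInf_lt (show ustar < ustar + η by linarith)
    -- rational q in (0, min δ 1)
    obtain ⟨q, hq0, hqδ⟩ := exists_rat_btwn (show (0:ℝ) < min δ 1 by positivity)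
    have hq0' : 0 < q := by exact_mod_cast hq0
    set ε : {q : ℚ // 0 < q} := ⟨min ε0.1 q, lt_min ε0.2 hq0'⟩ with hεdef
    have hεle0 : (ε : ℚ) ≤ ε0.1 := min_le_left _ _
    have hεleq : ((ε : ℚ) : ℝ) ≤ (q : ℝ) := by exact_mod_cast min_le_right ε0.1 q
    have hεδ : ((ε : ℚ) : ℝ) < δ := lt_of_le_of_lt hεleq (lt_of_lt_of_le hqδ (min_le_left _ _))
    have huε_lt : u (ε : ℝ) < ustar + η :=
      lt_of_le_of_lt (humono _ _ (by exact_mod_cast ε.2) (by exact_mod_cast hεle0)) hε0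
    have huε_ge : ustar ≤ u (ε : ℝ) := hustar_le ε
    have hmem : u (ε : ℝ) ∈ Ici ustar := huε_ge
    have hdist : dist (u (ε : ℝ)) ustar < η := by
      rw [Real.dist_eq, abs_of_nonneg (by linarith)]
      linarith
    have hfd := hball hmem hdist
    rw [Real.dist_eq] at hfd
    have habs := abs_lt.mp hfd
    have hkey := hukey (ε : ℝ) (by exact_mod_cast ε.2)
    -- f ustar > f (u ε) - δ ≥ u ε - ε - δ ≥ ustar - ε - δ > ustar - 2δ
    have : ustar - f ustar < 2 * δ := by linarith [habs.1, habs.2]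
    rw [hδdef] at this
    linarith
  have hustar_rhat : ustar ≤ rhat := le_csSup hSbdd ⟨hustar0, hustar_fix⟩
  -- the inner sup T
  set T : {q : ℚ // 0 < q} → ℝ := fun ε => ⨆ r : {q : ℚ // 0 ≤ q},
      (if f (r : ℝ) ≥ (r : ℝ) - (ε : ℝ) then (r : ℝ) else 0) with hTdef
  have hTbddA : ∀ ε : {q : ℚ // 0 < q}, BddAbove (Set.range fun r : {q : ℚ // 0 ≤ q} =>
      (if f (r : ℝ) ≥ (r : ℝ) - (ε : ℝ) then (r : ℝ) else 0)) := by
    intro ε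
    have hε : (0:ℝ) < (ε : ℝ) := by exact_mod_cast ε.2
    refine ⟨M + (ε : ℝ), ?_⟩
    rintro x ⟨r, rfl⟩
    dsimp only
    split_ifs with h
    · have hr0 : (0:ℝ) ≤ (r : ℝ) := by exact_mod_cast r.2
      have := hbdd (r : ℝ) hr0
      linarith
    · linarith
  have hT0 : ∀ ε : {q : ℚ // 0 < q}, 0 ≤ T ε := by
    intro ε
    have h := le_ciSup (hTbddA ε) (⟨0, le_refl 0⟩ : {q : ℚ // 0 ≤ q})
    simp only [Rat.cast_zero] at h
    refine le_trans ?_ h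
    split_ifs <;> norm_num
  -- rhat ≤ T ε
  have hrhat_le_T : ∀ ε : {q : ℚ // 0 < q}, rhat ≤ T ε := by
    intro ε
    have hε : (0:ℝ) < (ε : ℝ) := by exact_mod_cast ε.2
    obtain ⟨q, hq1, hq2⟩ := exists_rat_btwn (show rhat < rhat + (ε : ℝ) by linarith)
    have hq0 : (0:ℚ) ≤ q := by
      have : (0:ℝ) ≤ (q:ℝ) := le_of_lt (lt_of_le_of_lt hrhat0 hq1)
      exact_mod_cast this
    have hcond : f (q : ℝ) ≥ (q : ℝ) - (ε : ℝ) := by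
      have h1 : f rhat ≤ f (q : ℝ) := hmono rhat (q : ℝ) hrhat0 (le_of_lt hq1)
      linarith
    have h := le_ciSup (hTbddA ε) (⟨q, hq0⟩ : {q : ℚ // 0 ≤ q})
    rw [if_pos hcond] at h
    exact le_trans (le_of_lt hq1) h
  -- T ε ≤ u ε for ε < 1
  have hT_le_u : ∀ ε : {q : ℚ // 0 < q}, (ε : ℝ) ≤ 1 → T ε ≤ u (ε : ℝ) := by
    intro ε hε1
    have hε : (0:ℝ) < (ε : ℝ) := by exact_mod_cast ε.2
    apply ciSup_le
    intro r
    have hr0 : (0:ℝ) ≤ (r : ℝ) := by exact_mod_cast r.2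
    split_ifs with h
    · by_cases hrM : (r : ℝ) ≤ M + 1
      · exact le_csSup (hAbdd _) ⟨hr0, hrM, h⟩
      · exfalso
        push_neg at hrM
        have := hbdd (r : ℝ) hr0
        linarith
    · exact hu0 _ hε
  -- conclude
  have hTbddB : BddBelow (Set.range T) := by
    refine ⟨0, ?_⟩
    rintro x ⟨ε, rfl⟩
    exact hT0 ε
  apply le_antisymm
  · exact le_ciInf hrhat_le_T
  · have hinf_le_ustar : (⨅ ε : {q : ℚ // 0 < q}, T ε) ≤ ustar := by
      apply le_ciInf
      intro ε'
      set ε : {q : ℚ // 0 < q} := ⟨min ε'.1 (1/2), lt_min ε'.2 (by norm_num)⟩ with hεdef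
      have h1 : (ε : ℝ) ≤ 1 := by
        have h : (ε : ℚ) ≤ 1 := le_trans (min_le_right _ _) (by norm_num)
        exact_mod_cast h
      have h2 : (ε : ℝ) ≤ (ε' : ℝ) := by exact_mod_cast min_le_left ε'.1 (1/2)
      calc (⨅ ε : {q : ℚ // 0 < q}, T ε) ≤ T ε := ciInf_le hTbddB ε
        _ ≤ u (ε : ℝ) := hT_le_u ε h1
        _ ≤ u (ε' : ℝ) := humono _ _ (by exact_mod_cast ε.2) h2
    exact le_trans hinf_le_ustar hustar_rhat
end

section
/- Let (Ω, 𝔉, P) be a probability space, (H, 𝔥, Λ) a finite measure space, and (p_h)_{h∈H} a jointly measurable [0,1]-valued process on Ω × H. Let π : H → ℝ≥0 be measurable, α ∈ (0,1), and β : ℝ≥0 → ℝ≥0 nondecreasing and right-continuous. For each ω define r̂(ω) := max{r ≥ 0 : Λ({h : p_h(ω) ≤ α π(h) β(r)}) ≥ r}. Then ω ↦ r̂(ω) is measurable, and the rejection set process (ω,h) ↦ 1{p_h(ω) ≤ α π(h) β(r̂(ω))} is jointly measurable on Ω × H. -/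
/-!
For fixed `ω`, the volume `V_ω(r) = Λ {h | p_h(ω) ≤ α π(h) β(r)}` is nondecreasing and, by
continuity of measure from above and right-continuity of `β`, right-continuous in `r`; hence it is
upper semicontinuous and the admissible set `{r ≥ 0 | r ≤ V_ω(r)}` is compact, so `r̂(ω)` is a
maximum. Consequently `c ≤ r̂(ω)` holds iff for every `n` some rational `q ≥ c` satisfies
`q - 1/(n+1) ≤ V_ω(q)`: Cantor's intersection theorem applies to the compact sets
`{r ≥ c | r - 1/(n+1) ≤ V_ω(r)}`. This is a countable combination of measurable conditions in `ω`,
and joint measurability of the rejection set follows by composition.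
-/

open MeasureTheory Set Filter

theorem Monotone.upperSemicontinuous_of_continuousWithinAt_Ioi {α γ : Type*}
    [LinearOrder α] [TopologicalSpace α] [OrderTopology α]
    [LinearOrder γ] [TopologicalSpace γ] [OrderTopology γ] {f : α → γ}
    (hmono : Monotone f) (hrc : ∀ x, ContinuousWithinAt f (Ioi x) x) :
    UpperSemicontinuous f := by
  intro x y hy
  rw [← nhdsLE_sup_nhdsGT, eventually_sup]
  exact ⟨eventually_nhdsWithin_of_forall fun x' hx' => (hmono hx').trans_lt hy,
    (hrc x).eventually_lt_const hy⟩

theorem UpperSemicontinuous.isClosed_setOf_le {α γ : Type*} [TopologicalSpace α]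
    [LinearOrder γ] [TopologicalSpace γ] [ClosedIicTopology γ] {f g : α → γ}
    (hf : UpperSemicontinuous f) (hg : Continuous g) : IsClosed {x | g x ≤ f x} :=
  (upperSemicontinuous_iff_IsClosed_hypograph.1 hf).preimage (continuous_id.prodMk hg)

section StepUpCutoff

variable {f : ℝ → ℝ}

theorem exists_ge_le_self_iff_forall_exists_rat (hmono : Monotone f)
    (husc : UpperSemicontinuous f) (hbdd : BddAbove (range f)) (c : ℝ) :
    (∃ r, c ≤ r ∧ r ≤ f r) ↔ ∀ n : ℕ, ∃ q : ℚ, c ≤ q ∧ (q : ℝ) - 1 / (n + 1) ≤ f q := by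
  constructor
  · rintro ⟨r, hcr, hr⟩ n
    obtain ⟨q, hrq, hq⟩ :=
      exists_rat_btwn (lt_add_of_pos_right r (Nat.one_div_pos_of_nat (n := n)))
    exact ⟨q, hcr.trans hrq.le, by linarith [hmono hrq.le]⟩
  · intro h
    obtain ⟨M, hM⟩ := hbdd
    set K : ℕ → Set ℝ := fun n => Ici c ∩ {r | r - 1 / (n + 1) ≤ f r}
    have hKclosed : ∀ n, IsClosed (K n) := fun n =>
      isClosed_Ici.inter (husc.isClosed_setOf_le (continuous_id.sub continuous_const))
    have hKsub : K 0 ⊆ Icc c (M + 1) := by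
      rintro r ⟨hcr, hr : r - 1 / ((0 : ℕ) + 1) ≤ f r⟩
      have := hM (mem_range_self r)
      norm_num at hr
      exact ⟨hcr, by linarith⟩
    have hKanti : ∀ n, K (n + 1) ⊆ K n := by
      rintro n r ⟨hcr, hr : r - 1 / ((n + 1 : ℕ) + 1) ≤ f r⟩
      exact ⟨hcr, show r - 1 / (n + 1) ≤ f r by
        linarith [Nat.one_div_le_one_div (α := ℝ) n.le_succ]⟩
    obtain ⟨r, hr⟩ := IsCompact.nonempty_iInter_of_sequence_nonempty_isCompact_isClosed K
      hKanti (fun n => let ⟨q, hq⟩ := h n; ⟨q, hq⟩)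
      (isCompact_Icc.of_isClosed_subset (hKclosed 0) hKsub) hKclosed
    rw [mem_iInter] at hr
    refine ⟨r, (hr 0).1, le_of_not_gt fun hfr => ?_⟩
    obtain ⟨n, hn⟩ := exists_nat_one_div_lt (sub_pos.2 hfr)
    have hrn : r - 1 / (n + 1) ≤ f r := (hr n).2
    linarith

/-- The paper's `r̂(ω)` is `stepUpCutoff V_ω` for the volume function `V_ω`. -/
noncomputable def stepUpCutoff (f : ℝ → ℝ) : ℝ := sSup {r | 0 ≤ r ∧ r ≤ f r}

theorem le_stepUpCutoff_iff (husc : UpperSemicontinuous f) (hbdd : BddAbove (range f))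
    (h0 : 0 ≤ f 0) (c : ℝ) : c ≤ stepUpCutoff f ↔ ∃ r, max c 0 ≤ r ∧ r ≤ f r := by
  obtain ⟨M, hM⟩ := hbdd
  set S := {r | 0 ≤ r ∧ r ≤ f r}
  have hSsub : S ⊆ Icc 0 M := fun r hr => ⟨hr.1, hr.2.trans (hM (mem_range_self r))⟩
  have hS : IsCompact S := isCompact_Icc.of_isClosed_subset
    (isClosed_Ici.inter (husc.isClosed_setOf_le continuous_id)) hSsub
  constructor
  · intro hc
    obtain ⟨hnonneg, hmax⟩ := hS.sSup_mem ⟨0, le_rfl, h0⟩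
    exact ⟨sSup S, max_le hc hnonneg, hmax⟩
  · rintro ⟨r, hcr, hr⟩
    exact (le_of_max_le_left hcr).trans
      (le_csSup (bddAbove_Icc.mono hSsub) ⟨le_of_max_le_right hcr, hr⟩)

theorem measurable_stepUpCutoff {Ω : Type*} [MeasurableSpace Ω] {f : Ω → ℝ → ℝ}
    (hmeas : ∀ r, Measurable fun ω => f ω r) (hmono : ∀ ω, Monotone (f ω))
    (husc : ∀ ω, UpperSemicontinuous (f ω)) (hbdd : ∀ ω, BddAbove (range (f ω)))
    (h0 : ∀ ω, 0 ≤ f ω 0) : Measurable fun ω => stepUpCutoff (f ω) := by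
  refine measurable_of_Ici fun c => ?_
  have hpre : (fun ω => stepUpCutoff (f ω)) ⁻¹' Ici c =
      ⋂ n : ℕ, ⋃ q : ℚ, {ω | max c 0 ≤ q ∧ (q : ℝ) - 1 / (n + 1) ≤ f ω q} := by
    ext ω
    simp only [mem_preimage, mem_Ici, mem_iInter, mem_iUnion, mem_ofPred_eq]
    rw [le_stepUpCutoff_iff (husc ω) (hbdd ω) (h0 ω),
      exists_ge_le_self_iff_forall_exists_rat (hmono ω) (husc ω) (hbdd ω)]
  rw [hpre]
  exact .iInter fun n => .iUnion fun q =>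
    (measurable_const.and (measurableSet_le measurable_const (hmeas q)).mem).setOf

end StepUpCutoff

section SublevelMeasure

variable {H : Type*} [MeasurableSpace H] (μ : Measure H) [IsFiniteMeasure μ]
  {g : H → ℝ} {θ : H → ℝ → ℝ}

theorem monotone_measureReal_setOf_le (hθ : ∀ h, Monotone (θ h)) :
    Monotone fun r => μ.real {h | g h ≤ θ h r} :=
  fun _ _ hrs => measureReal_mono fun h hh => le_trans hh (hθ h hrs)

theorem continuousWithinAt_measureReal_setOf_le (hmeas : ∀ r, MeasurableSet {h | g h ≤ θ h r})
    (hθ : ∀ h, Monotone (θ h)) {r : ℝ}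
    (hθrc : ∀ h, ContinuousWithinAt (θ h) (Ioi r) r) :
    ContinuousWithinAt (fun r => μ.real {h | g h ≤ θ h r}) (Ioi r) r := by
  have hinter : ⋂ r' > r, {h | g h ≤ θ h r'} = {h | g h ≤ θ h r} := by
    refine Subset.antisymm (fun h hh => ?_) fun h hh => mem_iInter₂.2 fun r' hr' =>
      le_trans hh (hθ h (le_of_lt hr'))
    exact ge_of_tendsto (hθrc h) (eventually_nhdsWithin_of_forall (mem_iInter₂.1 hh))
  have hlim := tendsto_measure_biInter_gt (μ := μ) (fun r' _ => (hmeas r').nullMeasurableSet)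
    (fun i j _ hij h hh => le_trans hh (hθ h hij)) ⟨r + 1, by linarith, measure_ne_top _ _⟩
  rw [hinter] at hlim
  exact (ENNReal.tendsto_toReal (measure_ne_top _ _)).comp hlim

theorem upperSemicontinuous_measureReal_setOf_le (hmeas : ∀ r, MeasurableSet {h | g h ≤ θ h r})
    (hθ : ∀ h, Monotone (θ h)) (hθrc : ∀ h r, ContinuousWithinAt (θ h) (Ioi r) r) :
    UpperSemicontinuous fun r => μ.real {h | g h ≤ θ h r} :=
  (monotone_measureReal_setOf_le μ hθ).upperSemicontinuous_of_continuousWithinAt_Ioi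
    fun _ => continuousWithinAt_measureReal_setOf_le μ hmeas hθ fun h => hθrc h _

end SublevelMeasure

theorem stepup_measurable_general
    {Ω H : Type*} [MeasurableSpace Ω] [MeasurableSpace H]
    (Λ : Measure H) [IsFiniteMeasure Λ]
    (p : Ω → H → ℝ) (hp : Measurable (fun z : Ω × H => p z.1 z.2))
    (π : H → ℝ) (hπ : Measurable π) (hπ0 : ∀ h, 0 ≤ π h)
    (α : ℝ) (hα : α ∈ Ioo (0:ℝ) 1)
    (β : ℝ → ℝ) (hβmono : Monotone β)
    (hβrc : ∀ r : ℝ, ContinuousWithinAt β (Ici r) r)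
    (rhat : Ω → ℝ)
    (hrhat : ∀ ω, rhat ω =
      sSup {r : ℝ | 0 ≤ r ∧ ENNReal.ofReal r ≤ Λ {h | p ω h ≤ α * π h * β r}}) :
    Measurable rhat ∧
    MeasurableSet {z : Ω × H | p z.1 z.2 ≤ α * π z.2 * β (rhat z.1)} := by
  set θ : H → ℝ → ℝ := fun h r => α * π h * β r
  have hθ : ∀ h, Monotone (θ h) := fun h _ _ hrs =>
    mul_le_mul_of_nonneg_left (hβmono hrs) (mul_nonneg hα.1.le (hπ0 h))
  have hθrc : ∀ h r, ContinuousWithinAt (θ h) (Ioi r) r := fun h r =>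
    continuousWithinAt_const.mul ((hβrc r).mono Ioi_subset_Ici_self)
  have hlevel : ∀ r, MeasurableSet {z : Ω × H | p z.1 z.2 ≤ θ z.2 r} := fun r =>
    measurableSet_le hp ((measurable_const.mul (hπ.comp measurable_snd)).mul measurable_const)
  have hrhat_eq : rhat = fun ω => stepUpCutoff fun r => Λ.real {h | p ω h ≤ θ h r} := by
    funext ω
    simp_rw [hrhat ω, ENNReal.ofReal_le_iff_le_toReal (measure_ne_top _ _)]
    rfl
  have hmeas : Measurable rhat := hrhat_eq ▸ measurable_stepUpCutoff
    (fun r => (measurable_measure_prodMk_left (hlevel r)).ennreal_toReal)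
    (fun _ => monotone_measureReal_setOf_le Λ hθ)
    (fun _ => upperSemicontinuous_measureReal_setOf_le Λ
      (fun r => (hlevel r).preimage measurable_prodMk_left) hθ hθrc)
    (fun _ => ⟨Λ.real univ, forall_mem_range.2 fun _ => measureReal_mono (subset_univ _)⟩)
    (fun _ => measureReal_nonneg)
  exact ⟨hmeas, measurableSet_le hp ((measurable_const.mul (hπ.comp measurable_snd)).mul
    (hβmono.measurable.comp (hmeas.comp measurable_fst)))⟩

/-- The step-up cutoff `r̂(ω) = max{r ≥ 0 : Λ({h : p_h(ω) ≤ α π(h) β(r)}) ≥ r}` is a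
measurable function of `ω`, and the step-up rejection indicator
`(ω,h) ↦ 1{p_h(ω) ≤ α π(h) β(r̂(ω))}` is jointly measurable. -/
theorem stepup_measurable
    {Ω H : Type*} [MeasurableSpace Ω] [MeasurableSpace H]
    (P : Measure Ω) [IsProbabilityMeasure P]
    (Λ : Measure H) [IsFiniteMeasure Λ]
    (p : Ω → H → ℝ) (hp : Measurable (fun z : Ω × H => p z.1 z.2))
    (hp01 : ∀ ω h, p ω h ∈ Icc (0:ℝ) 1)
    (π : H → ℝ) (hπ : Measurable π) (hπ0 : ∀ h, 0 ≤ π h)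
    (α : ℝ) (hα : α ∈ Ioo (0:ℝ) 1)
    (β : ℝ → ℝ) (hβ0 : ∀ r, 0 ≤ β r) (hβmono : Monotone β)
    (hβrc : ∀ r : ℝ, ContinuousWithinAt β (Ici r) r)
    (rhat : Ω → ℝ)
    (hrhat : ∀ ω, rhat ω =
      sSup {r : ℝ | 0 ≤ r ∧ ENNReal.ofReal r ≤ Λ {h | p ω h ≤ α * π h * β r}}) :
    Measurable rhat ∧
    MeasurableSet {z : Ω × H | p z.1 z.2 ≤ α * π z.2 * β (rhat z.1)} :=
  stepup_measurable_general Λ p hp π hπ hπ0 α hα β hβmono hβrc rhat hrhat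
end

section
/- With the setup of a step-up procedure (finite measure Λ on H, jointly measurable p-value process, threshold Δ(h,r) = α π(h) β(r) with β nondecreasing right-continuous), the step-up rejection set R(ω) = L_Δ(ω, r̂(ω)) satisfies Λ(R(ω)) = r̂(ω) for every ω, i.e., the volume of the rejected set equals the step-up fixed point; in particular R satisfies the self-consistency condition R(ω) ⊂ {h : p_h(ω) ≤ α π(h) β(Λ(R(ω)))} with equality. -/
open MeasureTheory Set

/-- For the step-up procedure `R(ω) = {h : p_h(ω) ≤ α π(h) β(r̂(ω))}`, the volume of the
rejected set equals the step-up fixed point: `Λ(R(ω)) = r̂(ω)`; in particular `R` satisfies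
the self-consistency condition `R(ω) = {h : p_h(ω) ≤ α π(h) β(Λ(R(ω)))}` with equality. -/
theorem stepup_self_consistent
    {Ω H : Type*} [MeasurableSpace Ω] [MeasurableSpace H]
    (Λ : Measure H) [IsFiniteMeasure Λ]
    (p : Ω → H → ℝ) (hp : Measurable (fun z : Ω × H => p z.1 z.2))
    (hp01 : ∀ ω h, p ω h ∈ Icc (0:ℝ) 1)
    (π : H → ℝ) (hπ : Measurable π) (hπ0 : ∀ h, 0 ≤ π h)
    (α : ℝ) (hα : α ∈ Ioo (0:ℝ) 1)
    (β : ℝ → ℝ) (hβ0 : ∀ r, 0 ≤ β r) (hβmono : Monotone β)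
    (hβrc : ∀ r : ℝ, ContinuousWithinAt β (Ici r) r)
    (rhat : Ω → ℝ)
    (hrhat : ∀ ω, rhat ω =
      sSup {r : ℝ | 0 ≤ r ∧ ENNReal.ofReal r ≤ Λ {h | p ω h ≤ α * π h * β r}}) :
    ∀ ω,
      Λ {h | p ω h ≤ α * π h * β (rhat ω)} = ENNReal.ofReal (rhat ω) ∧
      {h | p ω h ≤ α * π h * β (rhat ω)}
        = {h | p ω h ≤ α * π h * β ((Λ {h' | p ω h' ≤ α * π h' * β (rhat ω)}).toReal)} := by
  intro ω
  set S : Set ℝ := {r : ℝ | 0 ≤ r ∧ ENNReal.ofReal r ≤ Λ {h | p ω h ≤ α * π h * β r}} with hS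
  have hLmono : ∀ {r s : ℝ}, r ≤ s →
      {h | p ω h ≤ α * π h * β r} ⊆ {h | p ω h ≤ α * π h * β s} := by
    intro r s hrs h hh
    exact le_trans hh
      (mul_le_mul_of_nonneg_left (hβmono hrs) (mul_nonneg hα.1.le (hπ0 h)))
  have h0S : (0:ℝ) ∈ S := ⟨le_refl 0, by simp⟩
  have hbdd : BddAbove S := by
    refine ⟨(Λ Set.univ).toReal, fun r hr => ?_⟩
    have h1 : ENNReal.ofReal r ≤ Λ Set.univ := hr.2.trans (measure_mono (subset_univ _))
    calc r = (ENNReal.ofReal r).toReal := (ENNReal.toReal_ofReal hr.1).symm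
      _ ≤ (Λ Set.univ).toReal := ENNReal.toReal_mono (measure_ne_top Λ _) h1
  have hrw := hrhat ω
  have hr0 : 0 ≤ rhat ω := by
    have := le_csSup hbdd h0S; rwa [← hrw] at this
  have hfin := measure_ne_top Λ {h | p ω h ≤ α * π h * β (rhat ω)}
  have hle : ENNReal.ofReal (rhat ω) ≤ Λ {h | p ω h ≤ α * π h * β (rhat ω)} := by
    have h1 : rhat ω ≤ (Λ {h | p ω h ≤ α * π h * β (rhat ω)}).toReal := by
      conv_lhs => rw [hrw]
      refine Real.sSup_le (fun s hs => ?_) ENNReal.toReal_nonneg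
      have hsle : s ≤ rhat ω := by
        have := le_csSup hbdd hs; rwa [← hrw] at this
      have h2 : ENNReal.ofReal s ≤ Λ {h | p ω h ≤ α * π h * β (rhat ω)} :=
        hs.2.trans (measure_mono (hLmono hsle))
      calc s = (ENNReal.ofReal s).toReal := (ENNReal.toReal_ofReal hs.1).symm
        _ ≤ _ := ENNReal.toReal_mono hfin h2
    calc ENNReal.ofReal (rhat ω)
        ≤ ENNReal.ofReal ((Λ {h | p ω h ≤ α * π h * β (rhat ω)}).toReal) :=
          ENNReal.ofReal_le_ofReal h1
      _ = _ := ENNReal.ofReal_toReal hfin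
  have hge : Λ {h | p ω h ≤ α * π h * β (rhat ω)} ≤ ENNReal.ofReal (rhat ω) := by
    by_contra hlt
    push_neg at hlt
    set M := (Λ {h | p ω h ≤ α * π h * β (rhat ω)}).toReal with hM
    have hMr : rhat ω < M := by
      have h3 := (ENNReal.toReal_lt_toReal ENNReal.ofReal_ne_top hfin).mpr hlt
      rwa [ENNReal.toReal_ofReal hr0] at h3
    have hrS : (rhat ω + M) / 2 ∈ S := by
      refine ⟨by linarith, ?_⟩
      have h1 : ENNReal.ofReal ((rhat ω + M) / 2) ≤ ENNReal.ofReal M :=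
        ENNReal.ofReal_le_ofReal (by linarith)
      rw [hM, ENNReal.ofReal_toReal hfin] at h1
      exact h1.trans (measure_mono (hLmono (by linarith)))
    have h4 : (rhat ω + M) / 2 ≤ rhat ω := by
      have := le_csSup hbdd hrS; rwa [← hrw] at this
    linarith
  have heq : Λ {h | p ω h ≤ α * π h * β (rhat ω)} = ENNReal.ofReal (rhat ω) :=
    le_antisymm hge hle
  refine ⟨heq, ?_⟩
  rw [heq, ENNReal.toReal_ofReal hr0]
end

section
/- Let 𝐩 = (p_h)_{h∈I} be a finite family of [0,1]-valued random variables which is strong PRDS on a subset I' ⊆ I: for every h ∈ I' and every measurable nondecreasing set D ⊆ [0,1]^I, u ↦ P(𝐩 ∈ D | p_h = u) is (a.s. equal to) a nondecreasing function of u. Then 𝐩 is weak PRDS on I': for every h ∈ I' and measurable nondecreasing D, u ↦ P(𝐩 ∈ D | p_h ≤ u) is nondecreasing on {u : P(p_h ≤ u) > 0}. -/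
/-!
Integrating the strong PRDS identity `E[1_D(𝐩) | p_h] = g(p_h)` over the `σ(p_h)`-measurable set
`{p_h ≤ u}` gives `P(𝐩 ∈ D, p_h ≤ u) = ∫_{p_h ≤ u} g(p_h)`, so `P(𝐩 ∈ D | p_h ≤ u)` is the average
of the nondecreasing `g(p_h)` over `{p_h ≤ u}`. Passing from `u` to `u' ≥ u` adds the region
`{u < p_h ≤ u'}`, where `g(p_h) ≥ g(u)`, to a region where `g(p_h) ≤ g(u)`, which cannot lower
the average.
-/

open MeasureTheory Set

lemma div_le_add_div_add_of_le_mul {a b α β c : ℝ} (hα : 0 < α) (hβ : 0 ≤ β)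
    (ha : a ≤ c * α) (hb : c * β ≤ b) : a / α ≤ (a + b) / (α + β) := by
  rw [div_le_div_iff₀ hα (by positivity)]
  nlinarith [mul_le_mul_of_nonneg_right ha hβ, mul_le_mul_of_nonneg_right hb hα.le]

section

variable {Ω : Type*} [MeasurableSpace Ω] {μ : Measure Ω}

theorem setIntegral_div_measureReal_le_of_monotone [IsFiniteMeasure μ] {X : Ω → ℝ}
    (hX : Measurable X) {g : ℝ → ℝ} (hg : Monotone g) (hgX : Integrable (fun ω => g (X ω)) μ)
    {u u' : ℝ} (hu : μ {ω | X ω ≤ u} ≠ 0) (huu' : u ≤ u') :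
    (∫ ω in {ω | X ω ≤ u}, g (X ω) ∂μ) / μ.real {ω | X ω ≤ u}
      ≤ (∫ ω in {ω | X ω ≤ u'}, g (X ω) ∂μ) / μ.real {ω | X ω ≤ u'} := by
  set A := {ω | X ω ≤ u}
  set B := {ω | X ω ≤ u'}
  have hA : MeasurableSet A := hX measurableSet_Iic
  have hBA : MeasurableSet (B \ A) := (hX measurableSet_Iic).diff hA
  have hAB : A ∪ B \ A = B := union_sdiff_cancel fun ω hω => le_trans hω huu'
  have hdisj : Disjoint A (B \ A) := disjoint_sdiff_right
  have hlow : ∫ ω in A, g (X ω) ∂μ ≤ g u * μ.real A := by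
    calc ∫ ω in A, g (X ω) ∂μ ≤ ∫ _ in A, g u ∂μ :=
          setIntegral_mono_on hgX.integrableOn (integrableOn_const (measure_ne_top _ _)) hA
            fun ω hω => hg hω
      _ = g u * μ.real A := by rw [setIntegral_const, smul_eq_mul, mul_comm]
  have hhigh : g u * μ.real (B \ A) ≤ ∫ ω in B \ A, g (X ω) ∂μ :=
    setIntegral_ge_of_const_le_real hBA (measure_ne_top _ _)
      (fun ω hω => hg (le_of_not_ge hω.2)) hgX.integrableOn
  rw [← hAB, setIntegral_union hdisj hBA hgX.integrableOn hgX.integrableOn,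
    measureReal_union hdisj hBA]
  exact div_le_add_div_add_of_le_mul (ENNReal.toReal_pos hu (measure_ne_top _ _))
    measureReal_nonneg hlow hhigh

theorem setIntegral_preimage_eq_of_condExp_ae_eq [IsFiniteMeasure μ] {X : Ω → ℝ}
    (hX : Measurable X) {f : Ω → ℝ} (hf : Integrable f μ) {g : ℝ → ℝ}
    (hfg : (fun ω => g (X ω)) =ᵐ[μ] μ[f | MeasurableSpace.comap X inferInstance])
    {s : Set ℝ} (hs : MeasurableSet s) :
    ∫ ω in X ⁻¹' s, f ω ∂μ = ∫ ω in X ⁻¹' s, g (X ω) ∂μ := by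
  rw [← setIntegral_condExp hX.comap_le hf ⟨s, hs, rfl⟩]
  exact setIntegral_congr_ae (hX hs) (hfg.mono fun ω h _ => h.symm)

theorem monotoneOn_setIntegral_Iic_div_of_condExp_ae_eq [IsFiniteMeasure μ] {X : Ω → ℝ}
    (hX : Measurable X) {f : Ω → ℝ} (hf : Integrable f μ) {g : ℝ → ℝ} (hg : Monotone g)
    (hfg : (fun ω => g (X ω)) =ᵐ[μ] μ[f | MeasurableSpace.comap X inferInstance]) :
    MonotoneOn (fun u => (∫ ω in {ω | X ω ≤ u}, f ω ∂μ) / μ.real {ω | X ω ≤ u})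
      {u | μ {ω | X ω ≤ u} ≠ 0} := by
  intro u hu u' _ huu'
  have hgX : Integrable (fun ω => g (X ω)) μ := integrable_condExp.congr hfg.symm
  have hsetIntegral (v : ℝ) : ∫ ω in {ω | X ω ≤ v}, f ω ∂μ = ∫ ω in {ω | X ω ≤ v}, g (X ω) ∂μ :=
    setIntegral_preimage_eq_of_condExp_ae_eq hX hf hfg measurableSet_Iic
  simp only [hsetIntegral]
  exact setIntegral_div_measureReal_le_of_monotone hX hg hgX hu huu'

theorem setIntegral_indicator_one_comp {E : Type*} [MeasurableSpace E] {Y : Ω → E}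
    (hY : Measurable Y) {D : Set E} (hD : MeasurableSet D) (s : Set Ω) :
    ∫ ω in s, D.indicator (fun _ => (1 : ℝ)) (Y ω) ∂μ = μ.real ({ω | Y ω ∈ D} ∩ s) := by
  change ∫ ω in s, (Y ⁻¹' D).indicator 1 ω ∂μ = _
  rw [integral_indicator_one (hY hD), measureReal_restrict_apply (hY hD)]
  rfl

end

theorem strong_PRDS_implies_weak_PRDS_general
    {Ω : Type*} [MeasurableSpace Ω] (P : Measure Ω) [IsProbabilityMeasure P]
    {I : Type*} (I' : Set I)
    (p : Ω → I → ℝ) (hp : Measurable p)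
    (hstrong : ∀ h ∈ I', ∀ D : Set (I → ℝ), MeasurableSet D → IsUpperSet D →
      ∃ g : ℝ → ℝ, Monotone g ∧
        (fun ω => g (p ω h))
          =ᵐ[P] P[ (fun ω => D.indicator (fun _ => (1:ℝ)) (p ω)) |
                    MeasurableSpace.comap (fun ω => p ω h) inferInstance ]) :
    ∀ h ∈ I', ∀ D : Set (I → ℝ), MeasurableSet D → IsUpperSet D →
      ∀ u u' : ℝ, u ≤ u' → 0 < P {ω | p ω h ≤ u} →
        P ({ω | p ω ∈ D} ∩ {ω | p ω h ≤ u}) / P {ω | p ω h ≤ u}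
          ≤ P ({ω | p ω ∈ D} ∩ {ω | p ω h ≤ u'}) / P {ω | p ω h ≤ u'} := by
  intro h hh D hD hup u u' huu' hpos
  obtain ⟨g, hg, hgae⟩ := hstrong h hh D hD hup
  have hX : Measurable fun ω => p ω h := (measurable_pi_apply h).comp hp
  have hind : Integrable (fun ω => D.indicator (fun _ => (1 : ℝ)) (p ω)) P :=
    ((integrable_const 1).indicator hD).comp_measurable hp
  have hpos' : P {ω | p ω h ≤ u'} ≠ 0 :=
    (hpos.trans_le (measure_mono fun ω hω => le_trans hω huu')).ne'
  have hreal :=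
    monotoneOn_setIntegral_Iic_div_of_condExp_ae_eq hX hind hg hgae hpos.ne' hpos' huu'
  simp only [setIntegral_indicator_one_comp hp hD] at hreal
  rw [← ENNReal.toReal_le_toReal (ENNReal.div_ne_top (measure_ne_top _ _) hpos.ne')
    (ENNReal.div_ne_top (measure_ne_top _ _) hpos'), ENNReal.toReal_div, ENNReal.toReal_div]
  exact hreal

/-- Strong PRDS implies weak PRDS for a finite family of p-values: if for every `h ∈ I'`
and every measurable nondecreasing set `D ⊆ [0,1]^I` the conditional probability
`P(𝐩 ∈ D | p_h = u)` agrees a.s. with a nondecreasing function of `u`, then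
`u ↦ P(𝐩 ∈ D | p_h ≤ u)` is nondecreasing on `{u : P(p_h ≤ u) > 0}`. -/
theorem strong_PRDS_implies_weak_PRDS
    {Ω : Type*} [MeasurableSpace Ω] (P : Measure Ω) [IsProbabilityMeasure P]
    {I : Type*} [Fintype I] (I' : Set I)
    (p : Ω → I → ℝ) (hp : Measurable p) (hp01 : ∀ ω i, p ω i ∈ Icc (0:ℝ) 1)
    (hstrong : ∀ h ∈ I', ∀ D : Set (I → ℝ), MeasurableSet D → IsUpperSet D →
      ∃ g : ℝ → ℝ, Monotone g ∧
        (fun ω => g (p ω h))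
          =ᵐ[P] P[ (fun ω => D.indicator (fun _ => (1:ℝ)) (p ω)) |
                    MeasurableSpace.comap (fun ω => p ω h) inferInstance ]) :
    ∀ h ∈ I', ∀ D : Set (I → ℝ), MeasurableSet D → IsUpperSet D →
      ∀ u u' : ℝ, u ≤ u' → 0 < P {ω | p ω h ≤ u} →
        P ({ω | p ω ∈ D} ∩ {ω | p ω h ≤ u}) / P {ω | p ω h ≤ u}
          ≤ P ({ω | p ω ∈ D} ∩ {ω | p ω h ≤ u'}) / P {ω | p ω h ≤ u'} :=
  strong_PRDS_implies_weak_PRDS_general P I' p hp hstrong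
end

section
/- Let X₁,…,X_m be i.i.d. real random variables with continuous common c.d.f. F, and let X_{(1)} ≤ … ≤ X_{(m)} be the order statistics. Then for any 1 ≤ k ≤ m, any t₀ ∈ ℝ with P(X_{(k)} ≤ t₀) > 0, and any nondecreasing measurable set D' ⊆ ℝ^m: P((X_{(1)},…,X_{(m)}) ∈ D' | X_{(k-1)} ≤ t₀) ≥ P((X_{(1)},…,X_{(m)}) ∈ D' | X_{(k)} ≤ t₀), where X_{(0)} := −∞ (so conditioning on X_{(0)} ≤ t₀ is trivial). -/
open MeasureTheory Set ProbabilityTheory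

/-!
Write `N x` for the number of coordinates of `x` that are `≤ t₀`. Then `X_{(k)} ≤ t₀` iff
`N X ≥ k`, the event `(X_{(1)}, …, X_{(m)}) ∈ D'` is `X ∈ B` for the permutation-invariant upper
set `B` of samples whose sorted version lies in `D'`, and the law of `X` is a product
`ν = μ^⊗m`.

Split the sample space according to the set `S` of coordinates that are `≤ t₀`; this pattern
`[S]` has mass `p ^ |S| * q ^ (m - |S|)` with `p = μ (-∞, t₀]`, `q = μ (t₀, ∞)`. Pushing one
coordinate above `t₀` can only help the upper set `B`: Fubini in that coordinate gives
`ν (B ∩ [S ∪ {i}]) * q ≤ ν (B ∩ [S]) * p`. With the symmetry of `B`, the conditional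
probability of `B` given the pattern `S` is therefore nonincreasing in `|S|`. Conditioning on
`N ≥ k - 1` rather than `N ≥ k` adds the patterns of size `k - 1`, where this conditional
probability is largest, so it can only increase the average.
-/

lemma IsUpperSet.measure_inter_Iic_mul_le {α : Type*} [LinearOrder α] [MeasurableSpace α]
    (μ : Measure α) {U : Set α} (hU : IsUpperSet U) (t : α) :
    μ (U ∩ Iic t) * μ (Ioi t) ≤ μ (U ∩ Ioi t) * μ (Iic t) := by
  rcases (U ∩ Iic t).eq_empty_or_nonempty with h | ⟨u, huU, hut⟩
  · simp [h]
  · rw [inter_eq_right.2 ((Ioi_subset_Ici hut).trans (hU.Ici_subset huU)), mul_comm]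
    gcongr
    exact inter_subset_right

lemma exists_perm_mem_iff_of_card_eq {α : Type*} [Fintype α] [DecidableEq α] {S T : Finset α}
    (h : S.card = T.card) : ∃ σ : Equiv.Perm α, ∀ i, σ i ∈ T ↔ i ∈ S := by
  let e : {i // i ∈ S} ≃ {i // i ∈ T} := Fintype.equivOfCardEq (by simpa using h)
  exact ⟨e.extendSubtype, fun i => ⟨fun hi => not_not.1 fun hS => e.extendSubtype_not_mem i hS hi,
    e.extendSubtype_mem i⟩⟩

lemma sum_mul_sum_union_le {ι R : Type*} [CommSemiring R] [PartialOrder R] [IsOrderedRing R]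
    [DecidableEq ι] {I J : Finset ι} (hIJ : Disjoint I J) (a c : ι → R)
    (h : ∀ i ∈ I, ∀ j ∈ J, a i * c j ≤ a j * c i) :
    (∑ i ∈ I, a i) * ∑ i ∈ I ∪ J, c i ≤ (∑ i ∈ I ∪ J, a i) * ∑ i ∈ I, c i := by
  have hcross : (∑ i ∈ I, a i) * ∑ j ∈ J, c j ≤ (∑ j ∈ J, a j) * ∑ i ∈ I, c i := by
    rw [Finset.sum_mul_sum, Finset.sum_mul_sum, Finset.sum_comm (s := J)]
    exact Finset.sum_le_sum fun i hi => Finset.sum_le_sum fun j hj => h i hi j hj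
  rw [Finset.sum_union hIJ, Finset.sum_union hIJ, mul_add, add_mul]
  exact add_le_add le_rfl hcross

lemma ENNReal.div_le_div_of_mul_le_mul {a b c d : ENNReal} (h : a * d ≤ c * b) (hb₀ : b ≠ 0)
    (hb : b ≠ ⊤) (hd₀ : d ≠ 0) (hd : d ≠ ⊤) : a / b ≤ c / d := by
  rw [ENNReal.div_le_iff hb₀ hb, div_eq_mul_inv, mul_right_comm, ← div_eq_mul_inv,
    ENNReal.le_div_iff_mul_le (.inl hd₀) (.inl hd)]
  exact h

lemma hasLaw_pi_of_cdf {Ω ι : Type*} [MeasurableSpace Ω] [Fintype ι] {P : Measure Ω}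
    [IsFiniteMeasure P] {X : Ω → ι → ℝ} (hX : Measurable X)
    (hindep : iIndepFun (fun i ω => X ω i) P) {F : ℝ → ℝ}
    (hcdf : ∀ i t, P {ω | X ω i ≤ t} = ENNReal.ofReal (F t)) (i₀ : ι) :
    HasLaw X (Measure.pi fun _ => P.map fun ω => X ω i₀) P := by
  have hXi : ∀ i, Measurable fun ω => X ω i := fun i => (measurable_pi_apply i).comp hX
  refine hindep.hasLaw_pi fun i => ⟨(hXi i).aemeasurable, Measure.ext_of_Iic _ _ fun a => ?_⟩
  rw [Measure.map_apply (hXi i) measurableSet_Iic, Measure.map_apply (hXi i₀) measurableSet_Iic]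
  exact (hcdf i a).trans (hcdf i₀ a).symm

section LowerIndices

variable {m : ℕ}

open Finset in
noncomputable def lowerIndices (t : ℝ) (x : Fin m → ℝ) : Finset (Fin m) := {i | x i ≤ t}

lemma lowerIndices_eq_iff {t : ℝ} {x : Fin m → ℝ} {S : Finset (Fin m)} :
    lowerIndices t x = S ↔ ∀ i, x i ≤ t ↔ i ∈ S := by
  simp [lowerIndices, Finset.ext_iff]

lemma preimage_lowerIndices_singleton (t : ℝ) (S : Finset (Fin m)) :
    lowerIndices t ⁻¹' {S} = univ.pi fun i => if i ∈ S then Iic t else Ioi t := by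
  ext x
  simp only [mem_preimage, mem_singleton_iff, lowerIndices_eq_iff, mem_pi, mem_univ,
    true_implies]
  refine forall_congr' fun i => ?_
  split_ifs with h <;> simp [h]

lemma measurableSet_preimage_lowerIndices (t : ℝ) (s : Set (Finset (Fin m))) :
    MeasurableSet (lowerIndices t ⁻¹' s) := by
  rw [← Set.biUnion_preimage_singleton]
  refine .biUnion s.to_countable fun S _ => ?_
  rw [preimage_lowerIndices_singleton]
  exact .univ_pi fun i => by split_ifs; exacts [measurableSet_Iic, measurableSet_Ioi]

lemma measure_pi_preimage_lowerIndices_singleton (μ : Measure ℝ) [SigmaFinite μ] (t : ℝ)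
    (S : Finset (Fin m)) :
    Measure.pi (fun _ => μ) (lowerIndices t ⁻¹' {S})
      = μ (Iic t) ^ S.card * μ (Ioi t) ^ (m - S.card) := by
  rw [preimage_lowerIndices_singleton, Measure.pi_pi]
  simp only [apply_ite μ, Finset.prod_ite, Finset.prod_const, Finset.filter_mem_eq_inter,
    Finset.univ_inter, Finset.filter_not, ← Finset.compl_eq_univ_sdiff, Finset.card_compl,
    Fintype.card_fin]

lemma measure_inter_preimage_lowerIndices (ν : Measure (Fin m → ℝ)) {B : Set (Fin m → ℝ)}
    (hB : MeasurableSet B) (t : ℝ) (s : Finset (Finset (Fin m))) :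
    ν (B ∩ lowerIndices t ⁻¹' s) = ∑ S ∈ s, ν (B ∩ lowerIndices t ⁻¹' {S}) := by
  rw [← Finset.set_biUnion_preimage_singleton, inter_iUnion₂, measure_biUnion_finset]
  · exact (pairwiseDisjoint_fiber _ _).mono fun _ => inter_subset_right
  · exact fun S _ => hB.inter (measurableSet_preimage_lowerIndices t _)

noncomputable def orderStatistics (x : Fin m → ℝ) : Fin m → ℝ := x ∘ Tuple.sort x

lemma card_lowerIndices_comp_perm (t : ℝ) (x : Fin m → ℝ) (σ : Equiv.Perm (Fin m)) :
    (lowerIndices t (x ∘ σ)).card = (lowerIndices t x).card :=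
  Finset.card_equiv σ fun i => by simp [lowerIndices]

lemma orderStatistics_le_iff {x : Fin m → ℝ} {t : ℝ} {j : Fin m} :
    orderStatistics x j ≤ t ↔ (j : ℕ) < (lowerIndices t x).card := by
  rw [← card_lowerIndices_comp_perm t x (Tuple.sort x)]
  exact (Tuple.lt_card_le_iff_apply_le_of_monotone (Tuple.monotone_sort x)).symm

lemma orderStatistics_comp_perm (x : Fin m → ℝ) (σ : Equiv.Perm (Fin m)) :
    orderStatistics (x ∘ σ) = orderStatistics x :=
  Tuple.comp_perm_comp_sort_eq_comp_sort

lemma orderStatistics_eq_of_monotone {x : Fin m → ℝ} {σ : Equiv.Perm (Fin m)}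
    (h : Monotone (x ∘ σ)) : orderStatistics x = x ∘ σ :=
  Tuple.unique_monotone (Tuple.monotone_sort x) h

lemma monotone_orderStatistics : Monotone (orderStatistics (m := m)) := by
  intro x y hxy j
  have hcard : (lowerIndices (orderStatistics y j) y).card ≤
      (lowerIndices (orderStatistics y j) x).card :=
    Finset.card_le_card fun i hi => by
      simp only [lowerIndices, Finset.mem_filter, Finset.mem_univ, true_and] at hi ⊢
      exact (hxy i).trans hi
  exact orderStatistics_le_iff.2 ((orderStatistics_le_iff.1 le_rfl).trans_le hcard)

lemma measurable_orderStatistics : Measurable (orderStatistics (m := m)) := by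
  refine measurable_pi_iff.2 fun j => measurable_of_Iic fun t => ?_
  have : (fun x => orderStatistics x j) ⁻¹' Iic t
      = lowerIndices t ⁻¹' {S | (j : ℕ) < S.card} := by
    ext x
    exact orderStatistics_le_iff
  rw [this]
  exact measurableSet_preimage_lowerIndices t _

end LowerIndices

section ProductMeasure

variable {m : ℕ} (μ : Measure ℝ) [SigmaFinite μ]

local notation "ν" => Measure.pi (fun _ : Fin m => μ)

lemma measure_pi_inter_insert_mul_le {B : Set (Fin m → ℝ)} (hB : MeasurableSet B)
    (hBup : IsUpperSet B) (t : ℝ) {S : Finset (Fin m)} {i : Fin m} (hi : i ∉ S) :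
    ν (B ∩ lowerIndices t ⁻¹' {insert i S}) * μ (Ioi t)
      ≤ ν (B ∩ lowerIndices t ⁻¹' {S}) * μ (Iic t) := by
  obtain ⟨n, rfl⟩ : ∃ n, m = n + 1 := ⟨m - 1, by have := i.pos; omega⟩
  set e := MeasurableEquiv.piFinSuccAbove (fun _ : Fin (n + 1) => ℝ) i
  have hfubini : ∀ T, Measure.pi (fun _ => μ) (B ∩ lowerIndices t ⁻¹' {T}) =
      ∫⁻ y, μ ((fun a => (a, y)) ⁻¹' (e.symm ⁻¹' (B ∩ lowerIndices t ⁻¹' {T})))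
        ∂(Measure.pi fun _ => μ) := fun T => by
    rw [← ((measurePreserving_piFinSuccAbove (fun _ => μ) i).symm e).measure_preimage
      (hB.inter (measurableSet_preimage_lowerIndices t _)).nullMeasurableSet,
      Measure.prod_apply_symm (e.symm.measurable
        (hB.inter (measurableSet_preimage_lowerIndices t _)))]
  rw [hfubini, hfubini]
  refine (lintegral_mul_const_le _ _).trans ((lintegral_mono fun y => ?_).trans_eq
    (lintegral_mul_const _ (measurable_measure_prodMk_right
      (e.symm.measurable (hB.inter (measurableSet_preimage_lowerIndices t _))))))
  have hU : IsUpperSet {a | Fin.insertNth i a y ∈ B} := fun a b hab ha =>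
    hBup (Fin.le_insertNth_iff.2 (by simpa using hab)) ha
  have hslice : ∀ T, (fun a => (a, y)) ⁻¹' (e.symm ⁻¹' (B ∩ lowerIndices t ⁻¹' {T})) =
      {a | Fin.insertNth i a y ∈ B} ∩
        {a | (a ≤ t ↔ i ∈ T) ∧ ∀ j, (y j ≤ t ↔ i.succAbove j ∈ T)} := fun T => by
    ext a
    simp [e, lowerIndices_eq_iff, Fin.forall_iff_succAbove i, Fin.insertNthEquiv]
  rw [hslice, hslice]
  by_cases hR : ∀ j, y j ≤ t ↔ i.succAbove j ∈ S
  · simpa [hR, hi, Fin.succAbove_ne, Iic, Ioi] using hU.measure_inter_Iic_mul_le μ t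
  · simp [hR, Fin.succAbove_ne]

lemma measure_pi_inter_union_mul_pow_le {B : Set (Fin m → ℝ)} (hB : MeasurableSet B)
    (hBup : IsUpperSet B) (t : ℝ) {T U : Finset (Fin m)} (hTU : Disjoint T U) :
    ν (B ∩ lowerIndices t ⁻¹' {T ∪ U}) * μ (Ioi t) ^ U.card
      ≤ ν (B ∩ lowerIndices t ⁻¹' {T}) * μ (Iic t) ^ U.card := by
  induction U using Finset.induction_on with
  | empty => simp
  | insert i U hiU ih =>
    rw [Finset.disjoint_insert_right] at hTU
    have hstep := measure_pi_inter_insert_mul_le μ hB hBup t (S := T ∪ U)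
      (Finset.notMem_union.2 ⟨hTU.1, hiU⟩)
    rw [Finset.union_insert, Finset.card_insert_of_notMem hiU, pow_succ, pow_succ]
    calc _ = ν (B ∩ lowerIndices t ⁻¹' {insert i (T ∪ U)}) * μ (Ioi t)
          * μ (Ioi t) ^ U.card := by ring
      _ ≤ ν (B ∩ lowerIndices t ⁻¹' {T ∪ U}) * μ (Iic t)
          * μ (Ioi t) ^ U.card := mul_le_mul_left hstep _
      _ = ν (B ∩ lowerIndices t ⁻¹' {T ∪ U}) * μ (Ioi t) ^ U.card
          * μ (Iic t) := by ring
      _ ≤ ν (B ∩ lowerIndices t ⁻¹' {T}) * μ (Iic t) ^ U.card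
          * μ (Iic t) := mul_le_mul_left (ih hTU.2) _
      _ = _ := by ring

lemma measure_pi_inter_preimage_lowerIndices_congr {B : Set (Fin m → ℝ)} (hB : MeasurableSet B)
    (hBsym : ∀ (σ : Equiv.Perm (Fin m)) (x : Fin m → ℝ), x ∘ σ ∈ B ↔ x ∈ B) (t : ℝ)
    {S T : Finset (Fin m)} (h : S.card = T.card) :
    ν (B ∩ lowerIndices t ⁻¹' {S})
      = ν (B ∩ lowerIndices t ⁻¹' {T}) := by
  obtain ⟨σ, hσ⟩ := exists_perm_mem_iff_of_card_eq h
  have hpres := measurePreserving_arrowCongr' (fun _ => μ) (fun _ => μ) σ.symm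
    (MeasurableEquiv.refl ℝ) fun _ => .id μ
  rw [← hpres.measure_preimage
    (hB.inter (measurableSet_preimage_lowerIndices t _)).nullMeasurableSet]
  congr 1
  have happly : ∀ x, MeasurableEquiv.arrowCongr' σ.symm (.refl ℝ) x = x ∘ σ := fun _ => rfl
  ext x
  simp only [mem_preimage, happly, mem_inter_iff, hBsym, mem_singleton_iff, lowerIndices_eq_iff,
    Function.comp_apply, ← hσ]
  exact and_congr_right fun _ => σ.forall_congr_right (q := fun j => x j ≤ t ↔ j ∈ T)

lemma measure_pi_inter_mul_measure_pi_le {B : Set (Fin m → ℝ)} (hB : MeasurableSet B)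
    (hBup : IsUpperSet B) (hBsym : ∀ (σ : Equiv.Perm (Fin m)) (x : Fin m → ℝ), x ∘ σ ∈ B ↔ x ∈ B)
    (t : ℝ) {S T : Finset (Fin m)} (hTS : T.card ≤ S.card) :
    ν (B ∩ lowerIndices t ⁻¹' {S})
        * ν (lowerIndices t ⁻¹' {T})
      ≤ ν (B ∩ lowerIndices t ⁻¹' {T})
        * ν (lowerIndices t ⁻¹' {S}) := by
  obtain ⟨T', hT'S, hT'⟩ := Finset.exists_subset_card_eq hTS
  obtain ⟨d, hd⟩ := Nat.exists_eq_add_of_le hTS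
  obtain ⟨r, hr⟩ := Nat.exists_eq_add_of_le (show S.card ≤ m by simpa using S.card_le_univ)
  have hchain := measure_pi_inter_union_mul_pow_le μ hB hBup t
    (Finset.disjoint_sdiff (s := T') (t := S))
  rw [Finset.union_sdiff_of_subset hT'S, Finset.card_sdiff_of_subset hT'S, hT', hd,
    Nat.add_sub_cancel_left, measure_pi_inter_preimage_lowerIndices_congr μ hB hBsym t hT']
    at hchain
  rw [measure_pi_preimage_lowerIndices_singleton, measure_pi_preimage_lowerIndices_singleton,
    show m - T.card = d + r by omega, show m - S.card = r by omega, hd]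
  calc _ = ν (B ∩ lowerIndices t ⁻¹' {S}) * μ (Ioi t) ^ d
          * (μ (Iic t) ^ T.card * μ (Ioi t) ^ r) := by ring
    _ ≤ ν (B ∩ lowerIndices t ⁻¹' {T}) * μ (Iic t) ^ d
          * (μ (Iic t) ^ T.card * μ (Ioi t) ^ r) := mul_le_mul_left hchain _
    _ = _ := by ring

lemma measure_pi_inter_succ_le_card_mul_le {B : Set (Fin m → ℝ)} (hB : MeasurableSet B)
    (hBup : IsUpperSet B) (hBsym : ∀ (σ : Equiv.Perm (Fin m)) (x : Fin m → ℝ), x ∘ σ ∈ B ↔ x ∈ B)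
    (t : ℝ) (k : ℕ) :
    ν (B ∩ {x | k + 1 ≤ (lowerIndices t x).card})
        * ν {x | k ≤ (lowerIndices t x).card}
      ≤ ν (B ∩ {x | k ≤ (lowerIndices t x).card})
        * ν {x | k + 1 ≤ (lowerIndices t x).card} := by
  have hset : ∀ j, {x : Fin m → ℝ | j ≤ (lowerIndices t x).card}
      = lowerIndices t ⁻¹' ↑(Finset.univ.filter fun S : Finset (Fin m) => j ≤ S.card) :=
    fun j => by ext; simp
  have hunion : (Finset.univ.filter fun S : Finset (Fin m) => k ≤ S.card)
      = (Finset.univ.filter fun S => k + 1 ≤ S.card) ∪ Finset.univ.filter fun S => S.card = k := by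
    ext; simp; omega
  have hfiber : ∀ S : Finset (Fin m), MeasurableSet (lowerIndices t ⁻¹' {S}) :=
    fun _ => measurableSet_preimage_lowerIndices t _
  rw [hset, hset, measure_inter_preimage_lowerIndices _ hB,
    measure_inter_preimage_lowerIndices _ hB,
    ← sum_measure_preimage_singleton _ fun S _ => hfiber S,
    ← sum_measure_preimage_singleton _ fun S _ => hfiber S, hunion]
  refine sum_mul_sum_union_le (Finset.disjoint_filter.2 fun S _ h h' => by omega) _ _ ?_
  intro S hS T hT
  simp only [Finset.mem_filter, Finset.mem_univ, true_and] at hS hT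
  exact measure_pi_inter_mul_measure_pi_le μ hB hBup hBsym t (by omega)

end ProductMeasure

section FiniteMeasure

variable {m : ℕ} (μ : Measure ℝ) [IsFiniteMeasure μ]

local notation "ν" => Measure.pi (fun _ : Fin m => μ)

lemma measure_pi_inter_div_succ_le {B : Set (Fin m → ℝ)} (hB : MeasurableSet B)
    (hBup : IsUpperSet B)
    (hBsym : ∀ (σ : Equiv.Perm (Fin m)) (x : Fin m → ℝ), x ∘ σ ∈ B ↔ x ∈ B) (t : ℝ) (k : ℕ)
    (hk : ν {x | k + 1 ≤ (lowerIndices t x).card} ≠ 0) :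
    ν (B ∩ {x | k + 1 ≤ (lowerIndices t x).card})
        / ν {x | k + 1 ≤ (lowerIndices t x).card}
      ≤ ν (B ∩ {x | k ≤ (lowerIndices t x).card})
        / ν {x | k ≤ (lowerIndices t x).card} := by
  have hsub : {x : Fin m → ℝ | k + 1 ≤ (lowerIndices t x).card}
      ⊆ {x | k ≤ (lowerIndices t x).card} :=
    fun _ hx => (Nat.le_succ k).trans hx
  exact ENNReal.div_le_div_of_mul_le_mul
    (measure_pi_inter_succ_le_card_mul_le μ hB hBup hBsym t k) hk (measure_ne_top _ _)
    (ne_bot_of_le_ne_bot hk (measure_mono hsub)) (measure_ne_top _ _)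

end FiniteMeasure

section SortedSequence

variable {m : ℕ} {x : Fin m → ℝ} {y : ℕ → ℝ}

lemma shift_eq_orderStatistics
    (hperm : ∃ σ : Equiv.Perm (Fin m), ∀ i : Fin m, y ((i : ℕ) + 1) = x (σ i))
    (hsorted : ∀ j j' : ℕ, 1 ≤ j → j ≤ j' → j' ≤ m → y j ≤ y j') :
    (fun i : Fin m => y ((i : ℕ) + 1)) = orderStatistics x := by
  obtain ⟨σ, hσ⟩ := hperm
  rw [funext hσ]
  refine (orderStatistics_eq_of_monotone fun i i' hii' => ?_).symm
  simpa only [Function.comp_apply, ← hσ] using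
    hsorted _ _ (by omega) (by simpa using hii') (by omega)

lemma le_iff_le_card_lowerIndices
    (hperm : ∃ σ : Equiv.Perm (Fin m), ∀ i : Fin m, y ((i : ℕ) + 1) = x (σ i))
    (hsorted : ∀ j j' : ℕ, 1 ≤ j → j ≤ j' → j' ≤ m → y j ≤ y j') (t : ℝ) {j : ℕ}
    (hj : 1 ≤ j) (hjm : j ≤ m) :
    y j ≤ t ↔ j ≤ (lowerIndices t x).card := by
  obtain ⟨i, rfl⟩ : ∃ i : Fin m, j = (i : ℕ) + 1 := ⟨⟨j - 1, by omega⟩, by simp; omega⟩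
  rw [show y (i + 1) = orderStatistics x i from congrFun (shift_eq_orderStatistics hperm hsorted) i,
    orderStatistics_le_iff, Nat.lt_iff_add_one_le]

end SortedSequence

theorem order_statistics_positive_regression_general
    {Ω : Type*} [MeasurableSpace Ω] (P : Measure Ω) [IsProbabilityMeasure P]
    (m : ℕ)
    (X : Ω → Fin m → ℝ) (hX : Measurable X)
    (hindep : iIndepFun (fun i ω => X ω i) P)
    (F : ℝ → ℝ)
    (hcdf : ∀ i : Fin m, ∀ t : ℝ, P {ω | X ω i ≤ t} = ENNReal.ofReal (F t))
    -- `Y ω j`, `1 ≤ j ≤ m`, are the order statistics of `X ω`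
    (Y : Ω → ℕ → ℝ)
    (hperm : ∀ ω, ∃ σ : Equiv.Perm (Fin m), ∀ i : Fin m, Y ω ((i : ℕ) + 1) = X ω (σ i))
    (hsorted : ∀ ω, ∀ j j' : ℕ, 1 ≤ j → j ≤ j' → j' ≤ m → Y ω j ≤ Y ω j')
    (t₀ : ℝ)
    (D' : Set (Fin m → ℝ)) (hD'meas : MeasurableSet D') (hD'up : IsUpperSet D')
    -- conditioning events: `E 0` is trivial (corresponding to `X_{(0)} = −∞`)
    (E : ℕ → Set Ω)
    (hE : ∀ j : ℕ, E j = if j = 0 then Set.univ else {ω | Y ω j ≤ t₀}) :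
    ∀ k : ℕ, 1 ≤ k → k ≤ m → 0 < P (E k) →
      P ({ω | (fun i : Fin m => Y ω ((i : ℕ) + 1)) ∈ D'} ∩ E k) / P (E k)
        ≤ P ({ω | (fun i : Fin m => Y ω ((i : ℕ) + 1)) ∈ D'} ∩ E (k - 1)) / P (E (k - 1)) := by
  rintro k hk hkm hEk
  obtain ⟨j, rfl⟩ : ∃ j, k = j + 1 := ⟨k - 1, by omega⟩
  let μ := P.map fun ω => X ω ⟨0, by omega⟩
  have hprob : ∀ A, MeasurableSet A → P (X ⁻¹' A) = Measure.pi (fun _ => μ) A := fun A hA => by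
    rw [← Measure.map_apply hX hA, (hasLaw_pi_of_cdf hX hindep hcdf _).map_eq]
  have hD : {ω | (fun i : Fin m => Y ω ((i : ℕ) + 1)) ∈ D'} = X ⁻¹' (orderStatistics ⁻¹' D') := by
    ext ω
    simp [shift_eq_orderStatistics (hperm ω) (hsorted ω)]
  have hE' : ∀ j ≤ m, E j = X ⁻¹' {x | j ≤ (lowerIndices t₀ x).card} := fun j hj => by
    ext ω
    rcases Nat.eq_zero_or_pos j with rfl | hj0
    · simp [hE]
    · simp [hE, hj0.ne', le_iff_le_card_lowerIndices (hperm ω) (hsorted ω) t₀ hj0 hj]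
  have hB : MeasurableSet (orderStatistics ⁻¹' D') := measurable_orderStatistics hD'meas
  have hlevel : ∀ j, MeasurableSet {x : Fin m → ℝ | j ≤ (lowerIndices t₀ x).card} :=
    fun j => measurableSet_preimage_lowerIndices t₀ {S | j ≤ S.card}
  rw [hE' _ hkm, hprob _ (hlevel _)] at hEk
  rw [hD, Nat.add_sub_cancel, hE' _ hkm, hE' j (by omega), ← preimage_inter, ← preimage_inter,
    hprob _ (hB.inter (hlevel _)), hprob _ (hB.inter (hlevel _)), hprob _ (hlevel _),
    hprob _ (hlevel _)]
  exact measure_pi_inter_div_succ_le μ hB (hD'up.preimage monotone_orderStatistics)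
    (fun σ x => by simp [orderStatistics_comp_perm]) t₀ j hEk.ne'

/-- Positive regression dependence of order statistics: for i.i.d. variables with
continuous c.d.f., conditioning a nondecreasing event of the order statistics on
`X_{(k)} ≤ t₀` makes it less likely than conditioning on `X_{(k-1)} ≤ t₀`
(with `X_{(0)} := −∞`, so that conditioning on `X_{(0)} ≤ t₀` is trivial). -/
theorem order_statistics_positive_regression
    {Ω : Type*} [MeasurableSpace Ω] (P : Measure Ω) [IsProbabilityMeasure P]
    (m : ℕ) (hm : 1 ≤ m)
    (X : Ω → Fin m → ℝ) (hX : Measurable X)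
    (hindep : iIndepFun (fun i ω => X ω i) P)
    (F : ℝ → ℝ) (hFcont : Continuous F) (hFmono : Monotone F)
    (hcdf : ∀ i : Fin m, ∀ t : ℝ, P {ω | X ω i ≤ t} = ENNReal.ofReal (F t))
    -- `Y ω j`, `1 ≤ j ≤ m`, are the order statistics of `X ω`
    (Y : Ω → ℕ → ℝ) (hY : Measurable Y)
    (hperm : ∀ ω, ∃ σ : Equiv.Perm (Fin m), ∀ i : Fin m, Y ω ((i : ℕ) + 1) = X ω (σ i))
    (hsorted : ∀ ω, ∀ j j' : ℕ, 1 ≤ j → j ≤ j' → j' ≤ m → Y ω j ≤ Y ω j')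
    (t₀ : ℝ)
    (D' : Set (Fin m → ℝ)) (hD'meas : MeasurableSet D') (hD'up : IsUpperSet D')
    -- conditioning events: `E 0` is trivial (corresponding to `X_{(0)} = −∞`)
    (E : ℕ → Set Ω)
    (hE : ∀ j : ℕ, E j = if j = 0 then Set.univ else {ω | Y ω j ≤ t₀})
    -- assumed positive regression dependence property of the order statistics
    (hPRD1 : ∃ g : ℝ → ℝ, Monotone g ∧
      (fun ω => g (Y ω 1)) =ᵐ[P]
        P[ (fun ω => D'.indicator (fun _ => (1:ℝ)) (fun i : Fin m => Y ω ((i : ℕ) + 1))) |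
            MeasurableSpace.comap (fun ω => Y ω 1) inferInstance ])
    (hPRD2 : ∀ k : ℕ, 2 ≤ k → k ≤ m → ∃ g : ℝ × ℝ → ℝ, Monotone g ∧
      (fun ω => g (Y ω (k - 1), Y ω k)) =ᵐ[P]
        P[ (fun ω => D'.indicator (fun _ => (1:ℝ)) (fun i : Fin m => Y ω ((i : ℕ) + 1))) |
            MeasurableSpace.comap (fun ω => (Y ω (k - 1), Y ω k)) inferInstance ]) :
    ∀ k : ℕ, 1 ≤ k → k ≤ m → 0 < P (E k) →
      P ({ω | (fun i : Fin m => Y ω ((i : ℕ) + 1)) ∈ D'} ∩ E k) / P (E k)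
        ≤ P ({ω | (fun i : Fin m => Y ω ((i : ℕ) + 1)) ∈ D'} ∩ E (k - 1)) / P (E (k - 1)) :=
  order_statistics_positive_regression_general P m X hX hindep F hcdf Y hperm hsorted t₀ D' hD'meas
    hD'up E hE
end

section
/- Let N be a Poisson point process on [0,1] with intensity λ ∈ L¹. Fix t₀ ∈ [η, 1−η] and disjoint intervals A = [0,t₀−η), B = [t₀−η, t₀+η], C = (t₀+η, 1]. For t ∈ [0,1] let M_t := N(I_t) with I_t = [(t−η)∨0, (t+η)∧1]. Then for any finite family t₀, t₁, …, t_{q−1} and any nonincreasing measurable set D' ⊆ ℕ^q, the map n ↦ P((M_{t_j})_{0≤j≤q−1} ∈ D' | M_{t₀} = n) is nonincreasing in n (wherever P(M_{t₀}=n)>0). -/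
/-!
Cut the line at all window endpoints. The increments `X_k` of `N` over the resulting cells are
independent Poisson variables, and every window count is a sum `M_{t_j} = ∑_{k ∈ K_j} X_k`, so
`M` is a monotone function of `X` and `{M ∈ D'}` is `{X ∈ A}` for a lower set `A`. It remains to
see that for a vector `X` of independent Poisson variables with means `μ_k`, a lower set `A` and
`S = K_0`, the ratio `F n / G n` is antitone, where `F n = P(X ∈ A, ∑_S X = n)` and
`G n = P(∑_S X = n)`. Size-biasing does this: since `x_k P(X = x) = μ_k P(X = x - e_k)`,
splitting the factor `n + 1 = ∑_{k ∈ S} x_k` gives `(n + 1) F (n + 1) ≤ (∑_S μ_k) F n` because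
`A` is a lower set, with equality `(n + 1) G (n + 1) = (∑_S μ_k) G n` for `A` the whole space.
-/

open MeasureTheory Set ProbabilityTheory
open scoped ENNReal NNReal

lemma natCast_succ_mul_poissonMeasure_singleton_succ (r : ℝ≥0) (n : ℕ) :
    ((n + 1 : ℕ) : ℝ≥0∞) * poissonMeasure r {n + 1} = r * poissonMeasure r {n} := by
  rw [poissonMeasure_singleton, poissonMeasure_singleton, ← ENNReal.ofReal_natCast,
    ← ENNReal.ofReal_coe_nnreal, ← ENNReal.ofReal_mul (by positivity),
    ← ENNReal.ofReal_mul r.coe_nonneg]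
  congr 1
  simp only [Nat.factorial_succ, Nat.cast_mul, pow_succ]
  field_simp

noncomputable abbrev poissonPi {ι : Type*} [Fintype ι] (μ : ι → ℝ≥0) : Measure (ι → ℕ) :=
  Measure.pi fun i => poissonMeasure (μ i)

section PoissonPi

variable {ι : Type*} [Fintype ι] [DecidableEq ι] {μ : ι → ℝ≥0}

lemma natCast_succ_mul_poissonPi_singleton_add_single (y : ι → ℕ) (k : ι) :
    ((y k + 1 : ℕ) : ℝ≥0∞) * poissonPi μ {y + (Pi.single k 1 : ι → ℕ)}
      = μ k * poissonPi μ {y} := by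
  have hrest : ∏ i ∈ {k}ᶜ, poissonMeasure (μ i) {(y + (Pi.single k 1 : ι → ℕ)) i}
      = ∏ i ∈ {k}ᶜ, poissonMeasure (μ i) {y i} :=
    Finset.prod_congr rfl fun i hi => by
      rw [Pi.add_apply, Pi.single_eq_of_ne (by simpa using hi), add_zero]
  rw [Measure.pi_singleton, Measure.pi_singleton, Fintype.prod_eq_mul_prod_compl k,
    Fintype.prod_eq_mul_prod_compl k, hrest, ← mul_assoc, ← mul_assoc, Pi.add_apply,
    Pi.single_eq_same, natCast_succ_mul_poissonMeasure_singleton_succ]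

omit [Fintype ι] in
lemma tsum_coord_mul_eq_tsum_add_single (f : (ι → ℕ) → ℝ≥0∞) (k : ι) :
    ∑' x : ι → ℕ, (x k : ℝ≥0∞) * f x
      = ∑' y : ι → ℕ, ((y k + 1 : ℕ) : ℝ≥0∞) * f (y + (Pi.single k 1 : ι → ℕ)) := by
  have hsupp : Function.support (fun x : ι → ℕ => (x k : ℝ≥0∞) * f x)
      ⊆ range (· + (Pi.single k 1 : ι → ℕ)) := by
    intro x hx
    have hk : 1 ≤ x k := Nat.one_le_iff_ne_zero.2 fun h => hx (by simp [h])
    refine ⟨x - (Pi.single k 1 : ι → ℕ), tsub_add_cancel_of_le fun i => ?_⟩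
    rcases eq_or_ne i k with rfl | hi
    · simpa using hk
    · simp [Pi.single_eq_of_ne hi]
  rw [← (add_left_injective _).tsum_eq hsupp]
  simp

lemma tsum_coord_mul_indicator_poissonPi (E : Set (ι → ℕ)) (k : ι) :
    ∑' x, (x k : ℝ≥0∞) * E.indicator (fun x => poissonPi μ {x}) x
      = μ k * poissonPi μ ((· + (Pi.single k 1 : ι → ℕ)) ⁻¹' E) := by
  rw [tsum_coord_mul_eq_tsum_add_single,
    ← Measure.tsum_indicator_apply_singleton _ _ MeasurableSet.of_discrete,
    ← ENNReal.tsum_mul_left]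
  refine tsum_congr fun y => ?_
  classical
  simp only [indicator_apply, mem_preimage]
  split_ifs
  exacts [natCast_succ_mul_poissonPi_singleton_add_single y k, by simp]

lemma natCast_succ_mul_poissonPi_inter_sum_eq (S : Finset ι) (E : Set (ι → ℕ)) (n : ℕ) :
    ((n + 1 : ℕ) : ℝ≥0∞) * poissonPi μ (E ∩ {x | ∑ i ∈ S, x i = n + 1})
      = ∑ k ∈ S, μ k *
          poissonPi μ ((· + (Pi.single k 1 : ι → ℕ)) ⁻¹' E ∩ {x | ∑ i ∈ S, x i = n}) := by
  set F := E ∩ {x : ι → ℕ | ∑ i ∈ S, x i = n + 1}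
  have hcount : ∀ x, ((n + 1 : ℕ) : ℝ≥0∞) * F.indicator (fun x => poissonPi μ {x}) x
      = ∑ k ∈ S, (x k : ℝ≥0∞) * F.indicator (fun x => poissonPi μ {x}) x := by
    intro x
    by_cases hx : x ∈ F
    · rw [← Finset.sum_mul, ← hx.2, Nat.cast_sum]
    · simp [indicator_of_notMem hx]
  have hpre : ∀ k ∈ S, (· + (Pi.single k 1 : ι → ℕ)) ⁻¹' F
      = (· + (Pi.single k 1 : ι → ℕ)) ⁻¹' E ∩ {x | ∑ i ∈ S, x i = n} := by
    intro k hk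
    ext x
    simp [F, Finset.sum_add_distrib, Finset.sum_pi_single', hk]
  rw [← Measure.tsum_indicator_apply_singleton _ _ MeasurableSet.of_discrete,
    ← ENNReal.tsum_mul_left, tsum_congr hcount,
    Summable.tsum_finsetSum fun _ _ => ENNReal.summable]
  refine Finset.sum_congr rfl fun k hk => ?_
  rw [tsum_coord_mul_indicator_poissonPi, hpre k hk]

lemma natCast_succ_mul_poissonPi_inter_sum_le {A : Set (ι → ℕ)} (hA : IsLowerSet A)
    (S : Finset ι) (n : ℕ) :
    ((n + 1 : ℕ) : ℝ≥0∞) * poissonPi μ (A ∩ {x | ∑ i ∈ S, x i = n + 1})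
      ≤ (∑ k ∈ S, (μ k : ℝ≥0∞)) * poissonPi μ (A ∩ {x | ∑ i ∈ S, x i = n}) := by
  rw [natCast_succ_mul_poissonPi_inter_sum_eq, Finset.sum_mul]
  gcongr with k
  exact fun y hy => hA le_self_add hy

lemma natCast_succ_mul_poissonPi_sum_eq (S : Finset ι) (n : ℕ) :
    ((n + 1 : ℕ) : ℝ≥0∞) * poissonPi μ {x | ∑ i ∈ S, x i = n + 1}
      = (∑ k ∈ S, (μ k : ℝ≥0∞)) * poissonPi μ {x | ∑ i ∈ S, x i = n} := by
  simpa [Finset.sum_mul] using natCast_succ_mul_poissonPi_inter_sum_eq (μ := μ) S univ n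

lemma poissonPi_inter_sum_mul_le_of_le {A : Set (ι → ℕ)} (hA : IsLowerSet A) (S : Finset ι)
    {n n' : ℕ} (hn : n ≤ n') :
    poissonPi μ (A ∩ {x | ∑ i ∈ S, x i = n'}) * poissonPi μ {x | ∑ i ∈ S, x i = n}
      ≤ poissonPi μ (A ∩ {x | ∑ i ∈ S, x i = n}) * poissonPi μ {x | ∑ i ∈ S, x i = n'} := by
  set F : ℕ → ℝ≥0∞ := fun m => poissonPi μ (A ∩ {x | ∑ i ∈ S, x i = m})
  set G : ℕ → ℝ≥0∞ := fun m => poissonPi μ {x | ∑ i ∈ S, x i = m}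
  set Λ : ℝ≥0∞ := ∑ k ∈ S, (μ k : ℝ≥0∞)
  change F n' * G n ≤ F n * G n'
  induction n', hn using Nat.le_induction with
  | base => rfl
  | succ m _ ih =>
    have hc : ((m + 1 : ℕ) : ℝ≥0∞) ≠ 0 := by simp
    rw [← ENNReal.mul_le_mul_iff_right hc (ENNReal.natCast_ne_top _)]
    calc ((m + 1 : ℕ) : ℝ≥0∞) * (F (m + 1) * G n)
        = (((m + 1 : ℕ) : ℝ≥0∞) * F (m + 1)) * G n := by ring
      _ ≤ Λ * F m * G n := mul_le_mul_left (natCast_succ_mul_poissonPi_inter_sum_le hA S m) _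
      _ = Λ * (F m * G n) := by ring
      _ ≤ Λ * (F n * G m) := by gcongr
      _ = F n * (Λ * G m) := by ring
      _ = ((m + 1 : ℕ) : ℝ≥0∞) * (F n * G (m + 1)) := by
        rw [← natCast_succ_mul_poissonPi_sum_eq]; ring

theorem poissonPi_inter_sum_div_le_of_le {A : Set (ι → ℕ)} (hA : IsLowerSet A)
    (S : Finset ι) {n n' : ℕ} (hn : n ≤ n') (h₀ : poissonPi μ {x | ∑ i ∈ S, x i = n} ≠ 0)
    (h₀' : poissonPi μ {x | ∑ i ∈ S, x i = n'} ≠ 0) :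
    poissonPi μ (A ∩ {x | ∑ i ∈ S, x i = n'}) / poissonPi μ {x | ∑ i ∈ S, x i = n'}
      ≤ poissonPi μ (A ∩ {x | ∑ i ∈ S, x i = n}) / poissonPi μ {x | ∑ i ∈ S, x i = n} := by
  rw [ENNReal.div_le_iff h₀' (measure_ne_top _ _), ← ENNReal.mul_div_right_comm,
    ENNReal.le_div_iff_mul_le (.inl h₀) (.inl (measure_ne_top _ _))]
  exact poissonPi_inter_sum_mul_le_of_le hA S hn

end PoissonPi

lemma Monotone.tsub_eq_sum_Ico {f : ℕ → ℕ} (hf : Monotone f) (p r : ℕ) :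
    f r - f p = ∑ k ∈ Finset.Ico p r, (f (k + 1) - f k) := by
  rcases le_total p r with h | h
  · have hrange := Finset.sum_range_tsub (f := fun i => f (p + i))
      (hf.comp fun _ _ h => Nat.add_le_add_left h p) (r - p)
    rw [Nat.add_sub_cancel' h, add_zero] at hrange
    rw [Finset.sum_Ico_eq_sum_range]
    exact hrange.symm
  · rw [Finset.Ico_eq_empty_of_le h, Finset.sum_empty, Nat.sub_eq_zero_of_le (hf h)]

lemma Finset.exists_monotone_enumeration {α : Type*} [LinearOrder α] [Nonempty α]
    (s : Finset α) :
    ∃ v : ℕ → α, Monotone v ∧ ∀ x ∈ s, ∃ i < s.card, v i = x := by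
  rcases s.eq_empty_or_nonempty with rfl | hs
  · exact ⟨fun _ => Classical.arbitrary α, monotone_const, by simp⟩
  have hlast : s.card - 1 < s.card := Nat.sub_one_lt (Finset.card_ne_zero.2 hs)
  refine ⟨fun i => s.orderEmbOfFin rfl ⟨min i (s.card - 1), (min_le_right _ _).trans_lt hlast⟩,
    fun i j hij => (s.orderEmbOfFin rfl).monotone (Fin.mk_le_mk.2 (min_le_min_right _ hij)),
    fun x hx => ?_⟩
  obtain ⟨i, rfl⟩ : x ∈ Set.range (s.orderEmbOfFin rfl) := by rwa [Finset.range_orderEmbOfFin]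
  exact ⟨i, i.2, by simp [Nat.le_sub_one_of_lt i.2]⟩

section PoissonProcess

variable {Ω : Type*} [MeasurableSpace Ω] {P : Measure Ω}

lemma hasLaw_poissonMeasure_of_measure_eq {Y : Ω → ℕ} (hY : Measurable Y) {r : ℝ≥0}
    (h : ∀ k : ℕ, P {ω | Y ω = k} = ENNReal.ofReal (poissonPMFReal r k)) :
    HasLaw Y (poissonMeasure r) P :=
  ⟨hY.aemeasurable, Measure.ext_of_singleton fun k => by
    rw [Measure.map_apply hY (measurableSet_singleton k), poissonMeasure_singleton]
    exact h k⟩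

structure IsPoissonProcess (P : Measure Ω) (N : Ω → ℝ → ℕ) (lam : ℝ → ℝ) : Prop where
  monotone : ∀ ω, Monotone (N ω)
  hasLaw_sub : ∀ a b, a ≤ b →
    HasLaw (fun ω => N ω b - N ω a) (poissonMeasure (∫ s in Ioc a b, lam s).toNNReal) P
  iIndepFun_sub : ∀ (q : ℕ) (a b : Fin q → ℝ), (∀ i, a i ≤ b i) →
    Pairwise (Function.onFun Disjoint fun i => Ioc (a i) (b i)) →
    iIndepFun (fun i ω => N ω (b i) - N ω (a i)) P

variable {N : Ω → ℝ → ℕ} {lam : ℝ → ℝ}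

lemma IsPoissonProcess.hasLaw_increments (hN : IsPoissonProcess P N lam) (c : ℕ) {v : ℕ → ℝ}
    (hv : Monotone v) :
    HasLaw (fun ω (k : Fin c) => N ω (v (k + 1)) - N ω (v k))
      (poissonPi fun k : Fin c => (∫ s in Ioc (v k) (v (k + 1)), lam s).toNNReal) P :=
  iIndepFun.hasLaw_pi (fun k => hN.hasLaw_sub _ _ (hv k.val.le_succ))
    (hN.iIndepFun_sub c (fun k => v k) (fun k => v (k + 1)) (fun k => hv k.val.le_succ)
      (hv.pairwise_disjoint_on_Ioc_succ.comp_of_injective Fin.val_injective))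

theorem IsPoissonProcess.exists_hasLaw_poissonPi_sub_eq_sum (hN : IsPoissonProcess P N lam)
    {κ : Type*} [Fintype κ] (a b : κ → ℝ) :
    ∃ (c : ℕ) (μ : Fin c → ℝ≥0) (X : Ω → Fin c → ℕ) (K : κ → Finset (Fin c)),
      HasLaw X (poissonPi μ) P ∧ ∀ ω j, N ω (b j) - N ω (a j) = ∑ k ∈ K j, X ω k := by
  classical
  set s := Finset.univ.image a ∪ Finset.univ.image b
  obtain ⟨v, hv, hgrid⟩ := s.exists_monotone_enumeration
  choose p _ hvp using fun j => hgrid (a j) (by simp [s])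
  choose r hr hvr using fun j => hgrid (b j) (by simp [s])
  refine ⟨s.card, _, _,
    fun j => (Finset.Ico (p j) (r j)).preimage Fin.val Fin.val_injective.injOn,
    hN.hasLaw_increments s.card hv, fun ω j => ?_⟩
  rw [← hvp j, ← hvr j]
  refine (((hN.monotone ω).comp hv).tsub_eq_sum_Ico (p j) (r j)).trans
    (Finset.sum_preimage _ _ _ (fun k => N ω (v (k + 1)) - N ω (v k)) fun k hk hkr => ?_).symm
  exact absurd ⟨⟨k, (Finset.mem_Ico.1 hk).2.trans (hr j)⟩, rfl⟩ hkr

end PoissonProcess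

theorem poisson_window_counts_conditional_monotone_general
    {Ω : Type*} [MeasurableSpace Ω] (P : Measure Ω)
    (N : Ω → ℝ → ℕ)
    (hpath : ∀ ω, Monotone (N ω))
    (hmeas : ∀ t : ℝ, Measurable (fun ω => N ω t))
    (lam : ℝ → ℝ)
    -- Poisson distributed increments
    (hdist : ∀ a b : ℝ, a ≤ b → ∀ k : ℕ,
      P {ω | N ω b - N ω a = k}
        = ENNReal.ofReal (poissonPMFReal (∫ s in Ioc a b, lam s).toNNReal k))
    -- independent increments over pairwise disjoint intervals
    (hindep : ∀ (q : ℕ) (a b : Fin q → ℝ), (∀ i, a i ≤ b i) →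
      Pairwise (Function.onFun Disjoint (fun i => Ioc (a i) (b i))) →
      iIndepFun (fun i ω => N ω (b i) - N ω (a i)) P)
    (η : ℝ)
    (q : ℕ) (t : Fin q → ℝ)
    (hq : 1 ≤ q)
    -- window counts
    (M : Ω → Fin q → ℕ)
    (hM : ∀ ω j, M ω j = N ω (min (t j + η) 1) - N ω (max (t j - η) 0))
    (D' : Set (Fin q → ℕ)) (hD' : IsLowerSet D') :
    ∀ n n' : ℕ, n ≤ n' →
      0 < P {ω | M ω ⟨0, hq⟩ = n} → 0 < P {ω | M ω ⟨0, hq⟩ = n'} →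
      P ({ω | M ω ∈ D'} ∩ {ω | M ω ⟨0, hq⟩ = n'}) / P {ω | M ω ⟨0, hq⟩ = n'}
        ≤ P ({ω | M ω ∈ D'} ∩ {ω | M ω ⟨0, hq⟩ = n}) / P {ω | M ω ⟨0, hq⟩ = n} := by
  intro n n' hn hpos hpos'
  have hN : IsPoissonProcess P N lam := ⟨hpath, fun a b hab =>
    hasLaw_poissonMeasure_of_measure_eq ((hmeas b).sub (hmeas a)) (hdist a b hab), hindep⟩
  obtain ⟨c, μ, X, K, hX, hsum⟩ := hN.exists_hasLaw_poissonPi_sub_eq_sum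
    (fun j => max (t j - η) 0) (fun j => min (t j + η) 1)
  set Φ : (Fin c → ℕ) → Fin q → ℕ := fun x j => ∑ k ∈ K j, x k
  have hMX : ∀ ω, M ω = Φ (X ω) := fun ω => funext fun j => (hM ω j).trans (hsum ω j)
  have hΦ : Monotone Φ := fun x y hxy j => Finset.sum_le_sum fun k _ => hxy k
  have hcount : ∀ m, P {ω | M ω ⟨0, hq⟩ = m} = poissonPi μ {x | Φ x ⟨0, hq⟩ = m} := fun m => by
    simp only [hMX]
    exact hX.measure_eq (p := fun x => Φ x ⟨0, hq⟩ = m) .of_discrete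
  have hjoint : ∀ m, P ({ω | M ω ∈ D'} ∩ {ω | M ω ⟨0, hq⟩ = m})
      = poissonPi μ (Φ ⁻¹' D' ∩ {x | Φ x ⟨0, hq⟩ = m}) := fun m => by
    simp only [hMX]
    exact hX.measure_eq (p := fun x => Φ x ∈ D' ∧ Φ x ⟨0, hq⟩ = m) .of_discrete
  rw [hcount] at hpos hpos'
  rw [hcount, hcount, hjoint, hjoint]
  exact poissonPi_inter_sum_div_le_of_le (hD'.preimage hΦ) _ hn hpos.ne' hpos'.ne'

/-- Conditional monotonicity of Poisson window counts: for a Poisson process on `[0,1]`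
with window counts `M_t = N(I_t)`, `I_t = [(t−η)∨0,(t+η)∧1]`, and a nonincreasing set
`D' ⊆ ℕ^q`, the map `n ↦ P((M_{t_j})_j ∈ D' | M_{t₀} = n)` is nonincreasing in `n`. -/
theorem poisson_window_counts_conditional_monotone
    {Ω : Type*} [MeasurableSpace Ω] (P : Measure Ω) [IsProbabilityMeasure P]
    (N : Ω → ℝ → ℕ)
    (hpath : ∀ ω, Monotone (N ω))
    (hmeas : ∀ t : ℝ, Measurable (fun ω => N ω t))
    (lam : ℝ → ℝ) (hlam : Measurable lam) (hlam0 : ∀ s, 0 ≤ lam s)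
    (hlamInt : IntegrableOn lam (Icc (-1 : ℝ) 2))
    -- Poisson distributed increments
    (hdist : ∀ a b : ℝ, a ≤ b → ∀ k : ℕ,
      P {ω | N ω b - N ω a = k}
        = ENNReal.ofReal (poissonPMFReal (∫ s in Ioc a b, lam s).toNNReal k))
    -- independent increments over pairwise disjoint intervals
    (hindep : ∀ (q : ℕ) (a b : Fin q → ℝ), (∀ i, a i ≤ b i) →
      Pairwise (Function.onFun Disjoint (fun i => Ioc (a i) (b i))) →
      iIndepFun (fun i ω => N ω (b i) - N ω (a i)) P)
    (η : ℝ) (hη : η ∈ Ioc (0:ℝ) 1)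
    (q : ℕ) (t : Fin q → ℝ) (ht : ∀ j, t j ∈ Icc (0:ℝ) 1)
    (hq : 1 ≤ q) (ht₀ : t ⟨0, hq⟩ ∈ Icc η (1 - η))
    -- window counts
    (M : Ω → Fin q → ℕ)
    (hM : ∀ ω j, M ω j = N ω (min (t j + η) 1) - N ω (max (t j - η) 0))
    (D' : Set (Fin q → ℕ)) (hD' : IsLowerSet D') :
    ∀ n n' : ℕ, n ≤ n' →
      0 < P {ω | M ω ⟨0, hq⟩ = n} → 0 < P {ω | M ω ⟨0, hq⟩ = n'} →
      P ({ω | M ω ∈ D'} ∩ {ω | M ω ⟨0, hq⟩ = n'}) / P {ω | M ω ⟨0, hq⟩ = n'}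
        ≤ P ({ω | M ω ∈ D'} ∩ {ω | M ω ⟨0, hq⟩ = n}) / P {ω | M ω ⟨0, hq⟩ = n} :=
  poisson_window_counts_conditional_monotone_general P N hpath hmeas lam hdist hindep η q t hq M hM
    D' hD'
end
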